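/- arXiv:1808.00985 — 7 statements merged into one kernel-verified Lean document; each statement's English description precedes it below -/
import Mathlib

section
/- Let (X,d) be a compact metric space and f : X → X a homeomorphism. If (X,f) is not minimal and has the gluing orbit property, then its topological entropy is positive: h(f) > 0. -/
open Filter Set Metric

namespace Paper

variable {X : Type*}

/-- Integer iteration of a homeomorphism: `f^n` for `n : ℤ`. -/
def zIter [TopologicalSpace X] (f : X ≃ₜ X) (n : ℤ) (x : X) : X :=
  if 0 ≤ n then (⇑f)^[n.toNat] x else (⇑f.symm)^[(-n).toNat] x

/-- `(X,f)` is minimal: every (two-sided) orbit is dense. -/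
def Minimal [TopologicalSpace X] (f : X ≃ₜ X) : Prop :=
  ∀ x : X, Dense (Set.range fun n : ℤ => zIter f n x)

/-- Topological transitivity. -/
def TopTransitive [TopologicalSpace X] (f : X ≃ₜ X) : Prop :=
  ∀ U V : Set X, IsOpen U → IsOpen V → U.Nonempty → V.Nonempty →
    ∃ n : ℤ, (U ∩ (zIter f n) ⁻¹' V).Nonempty

/-- Equicontinuity of the family of forward iterates. -/
def EquicontinuousSystem [MetricSpace X] (f : X → X) : Prop :=
  ∀ ε : ℝ, 0 < ε → ∃ δ : ℝ, 0 < δ ∧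
    ∀ x y : X, dist x y < δ → ∀ n : ℕ, dist (f^[n] x) (f^[n] y) < ε

/-- The transition times `s_j` (0-indexed: `s 0 = 0`,
`s (j+1) = s j + m_j + t_j - 1`) for an orbit sequence `C` (with lengths `m_j = (C j).2`)
and a gap `g`. -/
def sTimes (C : ℕ → X × ℕ) (g : ℕ → ℕ) : ℕ → ℕ
  | 0 => 0
  | j + 1 => sTimes C g j + (C j).2 + g j - 1

/-- `(C, g)` (an orbit sequence of rank `k` together with a gap) is `ε`-shadowed by `z`. -/
def Shadows [MetricSpace X] (f : X → X) (k : ℕ) (C : ℕ → X × ℕ) (g : ℕ → ℕ)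
    (ε : ℝ) (z : X) : Prop :=
  ∀ j < k, ∀ l < (C j).2, dist (f^[sTimes C g j + l] z) (f^[l] (C j).1) < ε

/-- The gluing orbit property. -/
def GluingOrbit [MetricSpace X] (f : X → X) : Prop :=
  ∀ ε : ℝ, 0 < ε → ∃ M : ℕ, 0 < M ∧
    ∀ k : ℕ, 0 < k → ∀ C : ℕ → X × ℕ, (∀ j < k, 0 < (C j).2) →
      ∃ g : ℕ → ℕ, (∀ j < k - 1, 0 < g j ∧ g j ≤ M) ∧
        ∃ z : X, Shadows f k C g ε z

/-- The specification property, at scale `ε` with constant `M`. -/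
def SpecWith [MetricSpace X] (f : X → X) (ε : ℝ) (M : ℕ) : Prop :=
  ∀ k : ℕ, 0 < k → ∀ C : ℕ → X × ℕ, (∀ j < k, 0 < (C j).2) →
    ∀ g : ℕ → ℕ, (∀ j < k - 1, M ≤ g j) →
      ∃ z : X, Shadows f k C g ε z

/-- The specification property. -/
def Specification [MetricSpace X] (f : X → X) : Prop :=
  ∀ ε : ℝ, 0 < ε → ∃ M : ℕ, 0 < M ∧ SpecWith f ε M

/-- The periodic gluing orbit property. -/
def PerGluingOrbit [MetricSpace X] (f : X → X) : Prop :=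
  ∀ ε : ℝ, 0 < ε → ∃ M : ℕ, 0 < M ∧
    ∀ k : ℕ, 0 < k → ∀ C : ℕ → X × ℕ, (∀ j < k, 0 < (C j).2) →
      ∃ t : ℕ, 0 < t ∧ t ≤ M ∧
        ∃ g : ℕ → ℕ, (∀ j < k - 1, 0 < g j ∧ g j ≤ M) ∧
          ∃ z : X, Shadows f k C g ε z ∧
            f^[sTimes C g (k - 1) + (C (k - 1)).2 + t] z = z

/-- `E` is an `(n,ε)`-separated set. -/
def IsSepSet [MetricSpace X] (f : X → X) (n : ℕ) (ε : ℝ) (E : Set X) : Prop :=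
  ∀ x ∈ E, ∀ y ∈ E, x ≠ y → ∃ k < n, ε < dist (f^[k] x) (f^[k] y)

/-- `s(n,ε)`: the maximal cardinality of an `(n,ε)`-separated subset of `X`. -/
noncomputable def sepNum [MetricSpace X] (f : X → X) (n : ℕ) (ε : ℝ) : ℕ :=
  sSup {N : ℕ | ∃ E : Finset X, IsSepSet f n ε ↑E ∧ E.card = N}

/-- Topological entropy `h(f) = lim_{ε → 0⁺} limsup_n (ln s(n,ε))/n`; since the inner
quantity is monotone as `ε` decreases, the limit equals the supremum over `ε > 0`. -/
noncomputable def topEnt [MetricSpace X] (f : X → X) : EReal :=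
  ⨆ (ε : ℝ) (_ : 0 < ε),
    Filter.limsup (fun n : ℕ => ((Real.log (sepNum f n ε) / n : ℝ) : EReal)) Filter.atTop

/-- The set of periodic points of period at most `n`. -/
def perPts (f : X → X) (n : ℕ) : Set X :=
  {x | ∃ m : ℕ, 0 < m ∧ m ≤ n ∧ f^[m] x = x}

open Classical in
/-- `p(f) = limsup_n (ln p_n(f))/n`, the exponential growth rate of periodic points
(`⊤` contributions when there are infinitely many such points). -/
noncomputable def perGrowth (f : X → X) : EReal :=
  Filter.limsup (fun n : ℕ =>
      if h : (perPts f n).Finite then ((Real.log (perPts f n).ncard / n : ℝ) : EReal) else ⊤)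
    Filter.atTop

/-- The lower box dimension of `X`, `liminf_{ε→0⁺} ln s(1,ε) / (-ln ε)`. -/
noncomputable def lowerBoxDim [MetricSpace X] (f : X → X) : EReal :=
  Filter.liminf (fun ε : ℝ => ((Real.log (sepNum f 1 ε) / (-Real.log ε) : ℝ) : EReal))
    (nhdsWithin 0 (Set.Ioi 0))



































/-! Semiflow case -/

/-- `φ` is a continuous semiflow on `X` (for nonnegative times). -/
def IsSemiflow [TopologicalSpace X] (φ : ℝ → X → X) : Prop :=
  (∀ x : X, φ 0 x = x) ∧
    (∀ s t : ℝ, 0 ≤ s → 0 ≤ t → ∀ x : X, φ (s + t) x = φ s (φ t x)) ∧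
      Continuous fun p : ℝ × X => φ p.1 p.2

/-- Minimality of a semiflow: every forward orbit is dense. -/
def MinimalFlow [TopologicalSpace X] (φ : ℝ → X → X) : Prop :=
  ∀ x : X, Dense {y : X | ∃ t : ℝ, 0 ≤ t ∧ φ t x = y}

/-- Transition times for the semiflow gluing: `s 0 = 0`, `s (j+1) = s j + m_j + t_j`. -/
def sFlow (C : ℕ → X × ℝ) (g : ℕ → ℝ) : ℕ → ℝ
  | 0 => 0
  | j + 1 => sFlow C g j + (C j).2 + g j

/-- Gluing orbit property for a semiflow. -/
def GluingFlow [MetricSpace X] (φ : ℝ → X → X) : Prop :=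
  ∀ ε : ℝ, 0 < ε → ∃ M : ℝ, 0 < M ∧
    ∀ k : ℕ, 0 < k → ∀ C : ℕ → X × ℝ, (∀ j < k, 0 ≤ (C j).2) →
      ∃ g : ℕ → ℝ, (∀ j < k - 1, 0 ≤ g j ∧ g j ≤ M) ∧
        ∃ z : X, ∀ j < k, ∀ t ∈ Set.Icc (0 : ℝ) (C j).2,
          dist (φ (sFlow C g j + t) z) (φ t (C j).1) < ε

/-- `E` is a `(T,ε)`-separated set for the semiflow `φ`. -/
def IsSepFlow [MetricSpace X] (φ : ℝ → X → X) (T ε : ℝ) (E : Set X) : Prop :=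
  ∀ x ∈ E, ∀ y ∈ E, x ≠ y → ∃ t ∈ Set.Icc (0 : ℝ) T, ε < dist (φ t x) (φ t y)

/-- `s(T,ε)` for the semiflow. -/
noncomputable def sepFlow [MetricSpace X] (φ : ℝ → X → X) (T ε : ℝ) : ℕ :=
  sSup {N : ℕ | ∃ E : Finset X, IsSepFlow φ T ε ↑E ∧ E.card = N}

/-- Topological entropy of a semiflow. -/
noncomputable def topEntFlow [MetricSpace X] (φ : ℝ → X → X) : EReal :=
  ⨆ (ε : ℝ) (_ : 0 < ε),
    Filter.limsup (fun T : ℝ => ((Real.log (sepFlow φ T ε) / T : ℝ) : EReal)) Filter.atTop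

/-! ### Auxiliary machinery for stmt0 -/

section Stmt0Aux

variable [MetricSpace X]

/-- Segment lengths encoding a boolean word. -/
def mlen (M : ℕ) (w : ℕ → Bool) (j : ℕ) : ℕ := if w j then 10*M else 6*M

/-- The orbit sequence associated to a word: markers at `q`, segments at `p`. -/
def Cword (p q : X) (M : ℕ) (w : ℕ → Bool) : ℕ → X × ℕ :=
  fun i => if i % 2 = 0 then (q, 1) else (p, mlen M w (i/2))

lemma mlen_ge {M : ℕ} (hM : 1 ≤ M) (w : ℕ → Bool) (j : ℕ) : 6*M ≤ mlen M w j := by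
  unfold mlen; split <;> omega

lemma mlen_le (M : ℕ) (w : ℕ → Bool) (j : ℕ) : mlen M w j ≤ 10*M := by
  unfold mlen; split <;> omega

lemma Cword_even (p q : X) (M : ℕ) (w : ℕ → Bool) (i : ℕ) :
    Cword p q M w (2*i) = (q, 1) := by
  unfold Cword
  simp [Nat.mul_mod_right]

lemma Cword_odd (p q : X) (M : ℕ) (w : ℕ → Bool) (i : ℕ) :
    Cword p q M w (2*i+1) = (p, mlen M w i) := by
  unfold Cword
  have h1 : (2*i+1) % 2 = 1 := by omega
  have h2 : (2*i+1) / 2 = i := by omega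
  rw [h1, h2]
  simp

lemma Cword_snd_pos {M : ℕ} (hM : 1 ≤ M) (p q : X) (w : ℕ → Bool) (i : ℕ) :
    0 < (Cword p q M w i).2 := by
  unfold Cword
  by_cases h : i % 2 = 0 <;> simp [h]
  have := mlen_ge hM w (i/2); omega

lemma Cword_snd_le {M : ℕ} (hM : 1 ≤ M) (p q : X) (w : ℕ → Bool) (i : ℕ) :
    (Cword p q M w i).2 ≤ 10*M := by
  unfold Cword
  by_cases h : i % 2 = 0 <;> simp [h]
  · omega
  · exact mlen_le M w (i/2)

lemma sTimes_succ_eq (C : ℕ → X × ℕ) (g : ℕ → ℕ) (i : ℕ) (h : 1 ≤ (C i).2) :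
    sTimes C g (i+1) + 1 = sTimes C g i + (C i).2 + g i := by
  show (sTimes C g i + (C i).2 + g i - 1) + 1 = _
  omega

lemma S_odd (p q : X) {M : ℕ} (hM : 1 ≤ M) (w : ℕ → Bool) (g : ℕ → ℕ) (i : ℕ) :
    sTimes (Cword p q M w) g (2*i+1) = sTimes (Cword p q M w) g (2*i) + g (2*i) := by
  have h := sTimes_succ_eq (Cword p q M w) g (2*i) (by rw [Cword_even])
  rw [Cword_even] at h
  simp only at h
  omega

lemma S_even (p q : X) {M : ℕ} (hM : 1 ≤ M) (w : ℕ → Bool) (g : ℕ → ℕ) (i : ℕ) :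
    sTimes (Cword p q M w) g (2*i+1+1) + 1
      = sTimes (Cword p q M w) g (2*i+1) + mlen M w i + g (2*i+1) := by
  have h := sTimes_succ_eq (Cword p q M w) g (2*i+1)
    (by rw [Cword_odd]; exact le_trans (by omega) (mlen_ge hM w i))
  rw [Cword_odd] at h
  exact h

lemma S_mono (p q : X) {M : ℕ} (hM : 1 ≤ M) (w : ℕ → Bool) (g : ℕ → ℕ) :
    Monotone (sTimes (Cword p q M w) g) := by
  apply monotone_nat_of_le_succ
  intro i
  have h := sTimes_succ_eq (Cword p q M w) g i (Cword_snd_pos hM p q w i)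
  have h2 := Cword_snd_pos hM p q w i
  omega

lemma S_le (p q : X) {M : ℕ} (hM : 1 ≤ M) (w : ℕ → Bool) (g : ℕ → ℕ)
    (i : ℕ) (hg : ∀ j < i, g j ≤ M) :
    sTimes (Cword p q M w) g i ≤ 11*M*i := by
  induction i with
  | zero => simp [sTimes]
  | succ n ih =>
    have h := sTimes_succ_eq (Cword p q M w) g n (Cword_snd_pos hM p q w n)
    have h2 := Cword_snd_le hM p q w n
    have h3 := hg n (by omega)
    have h4 := ih (fun j hj => hg j (by omega))
    have h5 : 11*M*(n+1) = 11*M*n + 11*M := by ring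
    omega

lemma S_block (p q : X) {M K : ℕ} (hM : 1 ≤ M) (w : ℕ → Bool) (g : ℕ → ℕ)
    (hg : ∀ i < 2*K-1, 1 ≤ g i ∧ g i ≤ M) {j : ℕ} (hj : j + 1 < K) :
    sTimes (Cword p q M w) g (2*j) + 6*M + 1 ≤ sTimes (Cword p q M w) g (2*j+1+1) := by
  have h1 := S_odd p q hM w g j
  have h2 := S_even p q hM w g j
  have h3 := mlen_ge hM w j
  have h4 := (hg (2*j) (by omega)).1
  have h5 := (hg (2*j+1) (by omega)).1
  omega

lemma locate (f : X → X) {p q : X} {δ : ℝ} (hδ : 0 < δ)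
    (hpq : ∀ l : ℕ, 4*δ ≤ dist (f^[l] p) q)
    {M K : ℕ} (hM : 1 ≤ M) (hK : 0 < K) {w : ℕ → Bool} {g : ℕ → ℕ}
    (hg : ∀ i < 2*K-1, 1 ≤ g i ∧ g i ≤ M) {z : X}
    (hz : Shadows f (2*K) (Cword p q M w) g δ z)
    {t : ℕ} (ht : dist (f^[t] z) q ≤ 2*δ)
    (htl : t < sTimes (Cword p q M w) g (2*(K-1)+1) + mlen M w (K-1)) :
    ∃ i < K, sTimes (Cword p q M w) g (2*i) ≤ t + M
      ∧ t ≤ sTimes (Cword p q M w) g (2*i) + M := by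
  classical
  have hnp : ∀ i < K, ∀ l < mlen M w i,
      t ≠ sTimes (Cword p q M w) g (2*i+1) + l := by
    intro i hi l hl he
    have hlt : l < (Cword p q M w (2*i+1)).2 := by rw [Cword_odd]; exact hl
    have hsh := hz (2*i+1) (by omega) l hlt
    rw [Cword_odd] at hsh
    simp only at hsh
    rw [← he] at hsh
    have h4 := hpq l
    have htri := dist_triangle (f^[l] p) (f^[t] z) q
    rw [dist_comm (f^[l] p) (f^[t] z)] at htri
    linarith
  have hP0 : sTimes (Cword p q M w) g (2*0) ≤ t := by
    have : sTimes (Cword p q M w) g (2*0) = 0 := rfl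
    omega
  set i₀ := Nat.findGreatest (fun i => sTimes (Cword p q M w) g (2*i) ≤ t) (K-1) with hi₀
  have hspec : sTimes (Cword p q M w) g (2*i₀) ≤ t :=
    Nat.findGreatest_spec (P := fun i => sTimes (Cword p q M w) g (2*i) ≤ t) (m := 0)
      (Nat.zero_le _) hP0
  have hle : i₀ ≤ K - 1 := Nat.findGreatest_le _
  have hgr : ∀ m, i₀ < m → m ≤ K-1 → ¬ sTimes (Cword p q M w) g (2*m) ≤ t :=
    fun m h1 h2 =>
      Nat.findGreatest_is_greatest (P := fun i => sTimes (Cword p q M w) g (2*i) ≤ t) h1 h2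
  have hO := S_odd p q hM w g i₀
  have hg0 := hg (2*i₀) (by omega)
  rcases lt_or_ge t (sTimes (Cword p q M w) g (2*i₀) + g (2*i₀)) with c1 | c2
  · exact ⟨i₀, by omega, by omega, by omega⟩
  rcases lt_or_ge t (sTimes (Cword p q M w) g (2*i₀+1) + mlen M w i₀) with c3 | c4
  · exact absurd (by omega)
      (hnp i₀ (by omega) (t - sTimes (Cword p q M w) g (2*i₀+1)) (by omega))
  by_cases hlast : i₀ = K - 1
  · exfalso
    rw [hlast] at c4
    omega
  · have hng := hgr (i₀+1) (by omega) (by omega)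
    have hE := S_even p q hM w g i₀
    have hg1 := hg (2*i₀+1) (by omega)
    have h2i : 2*(i₀+1) = 2*i₀+1+1 := by ring
    rw [h2i] at hng
    exact ⟨i₀+1, by omega, by rw [h2i]; omega, by rw [h2i]; omega⟩

lemma word_eq (f : X → X) {p q : X} {δ : ℝ} (hδ : 0 < δ)
    (hpq : ∀ l : ℕ, 4*δ ≤ dist (f^[l] p) q)
    {M K : ℕ} (hM : 1 ≤ M) (hK : 0 < K)
    {w w' : ℕ → Bool} {g g' : ℕ → ℕ}
    (hg : ∀ i < 2*K-1, 1 ≤ g i ∧ g i ≤ M)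
    (hg' : ∀ i < 2*K-1, 1 ≤ g' i ∧ g' i ≤ M)
    {z z' : X}
    (hz : Shadows f (2*K) (Cword p q M w) g δ z)
    (hz' : Shadows f (2*K) (Cword p q M w') g' δ z')
    (H : ∀ t < 22*K*M + 1, dist (f^[t] z) (f^[t] z') ≤ δ) :
    ∀ j, j + 1 < K → w j = w' j := by
  have hSb : ∀ i, i ≤ 2*K - 1 → sTimes (Cword p q M w) g i ≤ 22*K*M := by
    intro i hi
    have h1 := S_le p q hM w g i (fun j hj => (hg j (by omega)).2)
    have h2 : 11*M*i ≤ 11*M*(2*K) := Nat.mul_le_mul_left _ (by omega)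
    have h3 : 11*M*(2*K) = 22*K*M := by ring
    omega
  have hS'b : ∀ i, i ≤ 2*K - 1 → sTimes (Cword p q M w') g' i ≤ 22*K*M := by
    intro i hi
    have h1 := S_le p q hM w' g' i (fun j hj => (hg' j (by omega)).2)
    have h2 : 11*M*i ≤ 11*M*(2*K) := Nat.mul_le_mul_left _ (by omega)
    have h3 : 11*M*(2*K) = 22*K*M := by ring
    omega
  have hmark : ∀ i < K, dist (f^[sTimes (Cword p q M w) g (2*i)] z) q < δ := by
    intro i hi
    have h := hz (2*i) (by omega) 0 (by rw [Cword_even]; omega)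
    rw [Cword_even] at h
    simpa using h
  have hmark' : ∀ i < K, dist (f^[sTimes (Cword p q M w') g' (2*i)] z') q < δ := by
    intro i hi
    have h := hz' (2*i) (by omega) 0 (by rw [Cword_even]; omega)
    rw [Cword_even] at h
    simpa using h
  have hmonoS := S_mono p q hM w g
  have hmonoS' := S_mono p q hM w' g'
  have key : ∀ j, j < K →
      (sTimes (Cword p q M w) g (2*j) ≤ sTimes (Cword p q M w') g' (2*j) + M
        ∧ sTimes (Cword p q M w') g' (2*j) ≤ sTimes (Cword p q M w) g (2*j) + M) := by
    intro j
    induction j with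
    | zero =>
      intro _
      have e1 : sTimes (Cword p q M w) g (2*0) = 0 := rfl
      have e2 : sTimes (Cword p q M w') g' (2*0) = 0 := rfl
      omega
    | succ j ih =>
      intro hjK
      have hkey := ih (by omega)
      have h2j : 2*(j+1) = 2*j+1+1 := by ring
      have htn : sTimes (Cword p q M w') g' (2*(j+1)) < 22*K*M + 1 := by
        have := hS'b (2*(j+1)) (by omega); omega
      have ht2n : sTimes (Cword p q M w) g (2*(j+1)) < 22*K*M + 1 := by
        have := hSb (2*(j+1)) (by omega); omega
      have h1 : dist (f^[sTimes (Cword p q M w') g' (2*(j+1))] z') q < δ := hmark' (j+1) hjK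
      have h2 : dist (f^[sTimes (Cword p q M w') g' (2*(j+1))] z) q ≤ 2*δ := by
        have h3 := H _ htn
        have h4 := dist_triangle (f^[sTimes (Cword p q M w') g' (2*(j+1))] z)
          (f^[sTimes (Cword p q M w') g' (2*(j+1))] z') q
        linarith
      have hb : sTimes (Cword p q M w) g (2*j) + 6*M + 1
          ≤ sTimes (Cword p q M w) g (2*(j+1)) := by
        rw [h2j]; exact S_block p q hM w g hg hjK
      have hb' : sTimes (Cword p q M w') g' (2*j) + 6*M + 1
          ≤ sTimes (Cword p q M w') g' (2*(j+1)) := by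
        rw [h2j]; exact S_block p q hM w' g' hg' hjK
      have hfar : ¬ (sTimes (Cword p q M w) g (2*(j+1)) + 5*M + 1
          ≤ sTimes (Cword p q M w') g' (2*(j+1))) := by
        intro hf
        have h1' : dist (f^[sTimes (Cword p q M w) g (2*(j+1))] z) q < δ := hmark (j+1) hjK
        have h2' : dist (f^[sTimes (Cword p q M w) g (2*(j+1))] z') q ≤ 2*δ := by
          have h3 := H _ ht2n
          have h4 := dist_triangle (f^[sTimes (Cword p q M w) g (2*(j+1))] z')
            (f^[sTimes (Cword p q M w) g (2*(j+1))] z) q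
          rw [dist_comm (f^[sTimes (Cword p q M w) g (2*(j+1))] z')
            (f^[sTimes (Cword p q M w) g (2*(j+1))] z)] at h4
          linarith
        rcases lt_or_ge (sTimes (Cword p q M w) g (2*(j+1)))
            (sTimes (Cword p q M w') g' (2*(K-1)+1) + mlen M w' (K-1)) with hh | hh
        · obtain ⟨i', hi'K, hA, hB⟩ := locate f hδ hpq hM hK hg' hz' h2' hh
          rcases le_or_gt i' j with hij | hij
          · have hmo : sTimes (Cword p q M w') g' (2*i')
                ≤ sTimes (Cword p q M w') g' (2*j) := hmonoS' (by omega)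
            omega
          · have hmo : sTimes (Cword p q M w') g' (2*(j+1))
                ≤ sTimes (Cword p q M w') g' (2*i') := hmonoS' (by omega)
            omega
        · have hOdd' := S_odd p q hM w' g' (K-1)
          have hgK := (hg' (2*(K-1)) (by omega)).1
          have hml := mlen_ge hM w' (K-1)
          have hmo : sTimes (Cword p q M w') g' (2*(j+1))
              ≤ sTimes (Cword p q M w') g' (2*(K-1)) := hmonoS' (by omega)
          omega
      rcases lt_or_ge (sTimes (Cword p q M w') g' (2*(j+1)))
          (sTimes (Cword p q M w) g (2*(K-1)+1) + mlen M w (K-1)) with hh | hh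
      swap
      · exfalso; apply hfar
        have hOdd := S_odd p q hM w g (K-1)
        have hgK := (hg (2*(K-1)) (by omega)).1
        have hml := mlen_ge hM w (K-1)
        have hmo : sTimes (Cword p q M w) g (2*(j+1))
            ≤ sTimes (Cword p q M w) g (2*(K-1)) := hmonoS (by omega)
        omega
      obtain ⟨i, hiK, hA, hB⟩ := locate f hδ hpq hM hK hg hz h2 hh
      rcases lt_or_ge i (j+1) with hij | hij
      · exfalso
        have hmo : sTimes (Cword p q M w) g (2*i)
            ≤ sTimes (Cword p q M w) g (2*j) := hmonoS (by omega)
        omega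
      rcases lt_or_ge (j+1) i with hij2 | hij2
      · exfalso; apply hfar
        have hb2 : sTimes (Cword p q M w) g (2*(j+1)) + 6*M + 1
            ≤ sTimes (Cword p q M w) g (2*((j+1)+1)) := by
          have h2j2 : 2*((j+1)+1) = 2*(j+1)+1+1 := by ring
          rw [h2j2]; exact S_block p q hM w g hg (by omega)
        have hmo : sTimes (Cword p q M w) g (2*((j+1)+1))
            ≤ sTimes (Cword p q M w) g (2*i) := hmonoS (by omega)
        omega
      · have heq : i = j+1 := by omega
        rw [heq] at hA hB
        exact ⟨by omega, by omega⟩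
  intro j hj
  have k1 := key j (by omega)
  have k2 := key (j+1) hj
  have h2j : 2*(j+1) = 2*j+1+1 := by ring
  rw [h2j] at k2
  have e1 := S_odd p q hM w g j
  have e2 := S_even p q hM w g j
  have e1' := S_odd p q hM w' g' j
  have e2' := S_even p q hM w' g' j
  have hg0 := hg (2*j) (by omega)
  have hg1 := hg (2*j+1) (by omega)
  have hg0' := hg' (2*j) (by omega)
  have hg1' := hg' (2*j+1) (by omega)
  cases hwj : w j <;> cases hwj' : w' j
  · rfl
  · exfalso
    simp [mlen, hwj, hwj'] at e2 e2'
    omega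
  · exfalso
    simp [mlen, hwj, hwj'] at e2 e2'
    omega
  · rfl

lemma isSepSet_mono (f : X → X) {n n' : ℕ} (h : n ≤ n') {ε : ℝ} {E : Set X}
    (hE : IsSepSet f n ε E) : IsSepSet f n' ε E := by
  intro x hx y hy hxy
  obtain ⟨k, hk, hd⟩ := hE x hx y hy hxy
  exact ⟨k, by omega, hd⟩

lemma sep_card_bdd [CompactSpace X] (f : X → X) (n : ℕ) {δ : ℝ} (hδ : 0 < δ) :
    BddAbove {N : ℕ | ∃ E : Finset X, IsSepSet f n δ ↑E ∧ E.card = N} := by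
  classical
  obtain ⟨t, htf, htc⟩ :=
    (Metric.totallyBounded_iff.mp (isCompact_univ (X := Fin n → X)).totallyBounded)
      (δ/2) (by linarith)
  refine ⟨htf.toFinset.card, ?_⟩
  rintro N ⟨E, hE, rfl⟩
  have hc : ∀ x : X, ∃ c, c ∈ htf.toFinset ∧
      dist (fun i : Fin n => f^[(i:ℕ)] x) c < δ/2 := by
    intro x
    have hx := htc (Set.mem_univ (fun i : Fin n => f^[(i:ℕ)] x))
    simp only [Set.mem_iUnion] at hx
    obtain ⟨c, hct, hcb⟩ := hx
    exact ⟨c, htf.mem_toFinset.mpr hct, Metric.mem_ball.mp hcb⟩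
  choose c hct hcb using hc
  refine Finset.card_le_card_of_injOn c (fun x _ => hct x) ?_
  intro x hx y hy hcxy
  by_contra hxy
  obtain ⟨k, hk, hd⟩ := hE x (Finset.mem_coe.mpr hx) y (Finset.mem_coe.mpr hy) hxy
  have h1 : dist (f^[k] x) (f^[k] y)
      ≤ dist (fun i : Fin n => f^[(i:ℕ)] x) (fun i : Fin n => f^[(i:ℕ)] y) := by
    have h := dist_le_pi_dist (fun i : Fin n => f^[(i:ℕ)] x)
      (fun i : Fin n => f^[(i:ℕ)] y) ⟨k, hk⟩
    simpa using h
  have h2 := dist_triangle (fun i : Fin n => f^[(i:ℕ)] x) (c x)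
    (fun i : Fin n => f^[(i:ℕ)] y)
  have h3 := hcb x
  have h4 := hcb y
  rw [hcxy] at h3 h2
  have h5 : dist (c y) (fun i : Fin n => f^[(i:ℕ)] y)
      = dist (fun i : Fin n => f^[(i:ℕ)] y) (c y) := dist_comm _ _
  linarith

end Stmt0Aux

theorem stmt0 [MetricSpace X] [CompactSpace X] (f : X ≃ₜ X)
    (hnm : ¬ Minimal f) (hgo : GluingOrbit (⇑f)) :
    0 < topEnt (⇑f) := by
  classical
  -- Step 1: extract `p`, `q`, `δ` with the orbit of `p` staying `4δ`-far from `q`.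
  rw [Minimal] at hnm
  push_neg at hnm
  obtain ⟨p, hp⟩ := hnm
  have hex : ∃ q : X, q ∉ closure (Set.range fun n : ℤ => zIter f n p) := by
    by_contra h
    push_neg at h
    exact hp (fun x => h x)
  obtain ⟨q, hq⟩ := hex
  rw [Metric.mem_closure_iff] at hq
  push_neg at hq
  obtain ⟨ε₀, hε₀, hball⟩ := hq
  set δ : ℝ := ε₀ / 4 with hδdef
  have hδ : 0 < δ := by positivity
  have hpq : ∀ l : ℕ, 4*δ ≤ dist ((⇑f)^[l] p) q := by
    intro l
    have hmem : (⇑f)^[l] p ∈ Set.range fun n : ℤ => zIter f n p := by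
      refine ⟨(l : ℤ), ?_⟩
      simp [zIter]
    have h := hball _ hmem
    rw [dist_comm] at h
    have : 4*δ = ε₀ := by rw [hδdef]; ring
    linarith
  -- Step 2: gluing constant
  obtain ⟨M, hM, Hglue⟩ := hgo δ hδ
  -- Step 3: exponentially many separated points
  have hsep : ∀ k : ℕ, 0 < k → ∀ nn : ℕ, 22*(k+1)*M + 1 ≤ nn →
      (2:ℕ)^k ≤ sepNum (⇑f) nn δ := by
    intro k hk nn hnn
    set K : ℕ := k + 1 with hKdef
    set ext : (Fin k → Bool) → ℕ → Bool :=
      fun v j => if h : j < k then v ⟨j, h⟩ else false with hext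
    have happ : ∀ v : Fin k → Bool, ∃ g : ℕ → ℕ,
        (∀ j < 2*K - 1, 0 < g j ∧ g j ≤ M) ∧
          ∃ z, Shadows (⇑f) (2*K) (Cword p q M (ext v)) g δ z := by
      intro v
      exact Hglue (2*K) (by omega) _ (fun j _ => Cword_snd_pos hM p q (ext v) j)
    choose g hgb z hzs using happ
    have hsepa : ∀ v v' : Fin k → Bool, v ≠ v' →
        ∃ t < 22*K*M + 1, δ < dist ((⇑f)^[t] (z v)) ((⇑f)^[t] (z v')) := by
      intro v v' hne
      by_contra hcon
      push_neg at hcon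
      have hweq := word_eq (⇑f) hδ hpq hM (show 0 < K by omega)
        (hgb v) (hgb v') (hzs v) (hzs v') hcon
      apply hne
      funext i
      have h2 := hweq (i : ℕ) (by omega)
      simpa [hext, i.isLt] using h2
    have hinj : Function.Injective z := by
      intro v v' hzz
      by_contra hne
      obtain ⟨t, _, hd⟩ := hsepa v v' hne
      rw [hzz] at hd
      simp at hd
      linarith
    set E : Finset X := Finset.image z Finset.univ with hE
    have hcard : E.card = 2^k := by
      rw [hE, Finset.card_image_of_injective _ hinj, Finset.card_univ]
      simp
    have hEs : IsSepSet (⇑f) nn δ ↑E := by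
      have h1 : IsSepSet (⇑f) (22*K*M + 1) δ ↑E := by
        intro x hx y hy hxy
        simp only [hE, Finset.coe_image, Set.mem_image] at hx hy
        obtain ⟨v, _, rfl⟩ := hx
        obtain ⟨v', _, rfl⟩ := hy
        have hne : v ≠ v' := fun h => hxy (by rw [h])
        exact hsepa v v' hne
      exact isSepSet_mono (⇑f) (by omega) h1
    exact le_csSup (sep_card_bdd (⇑f) nn hδ) ⟨E, hEs, hcard⟩
  -- Step 4: entropy lower bound
  have hM1 : (1:ℝ) ≤ (M:ℝ) := by exact_mod_cast hM
  have hlog2 : (0:ℝ) < Real.log 2 := Real.log_pos (by norm_num)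
  have hc : (0:ℝ) < Real.log 2 / (88*(M:ℝ)) := by
    apply div_pos hlog2
    linarith
  have hev : ∀ nn : ℕ, 88*M + 2 ≤ nn →
      Real.log 2 / (88*(M:ℝ)) ≤ Real.log (sepNum (⇑f) nn δ) / nn := by
    intro nn hnn
    set k : ℕ := nn / (44*M) with hkdef
    have hdm : 44*M*k + nn % (44*M) = nn := Nat.div_add_mod nn (44*M)
    have hmod : nn % (44*M) < 44*M := Nat.mod_lt _ (by omega)
    obtain ⟨a, ha⟩ : ∃ a, a = M * k := ⟨_, rfl⟩
    have h44 : 44*M*k = 44*a := by rw [ha]; ring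
    have h22 : 22*(k+1)*M = 22*a + 22*M := by rw [ha]; ring
    have h88 : 88*M*k = 88*a := by rw [ha]; ring
    have hk1 : 1 ≤ k := by
      rw [hkdef]
      rw [Nat.le_div_iff_mul_le (by omega)]
      omega
    have ha1 : M ≤ a := by
      rw [ha]
      calc M = M * 1 := by ring
        _ ≤ M * k := Nat.mul_le_mul_left _ hk1
    have hfit : 22*(k+1)*M + 1 ≤ nn := by omega
    have hnn88 : nn ≤ 88*M*k := by omega
    have hsnum := hsep k (by omega) nn hfit
    have hnpos : (0:ℝ) < (nn:ℝ) := by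
      have : 0 < nn := by omega
      exact_mod_cast this
    have hlog : (k : ℝ) * Real.log 2 ≤ Real.log (sepNum (⇑f) nn δ) := by
      calc (k:ℝ) * Real.log 2 = Real.log ((2:ℝ)^k) := by rw [Real.log_pow]
        _ ≤ Real.log (sepNum (⇑f) nn δ) := by
            apply Real.log_le_log (by positivity)
            exact_mod_cast hsnum
    have h88r : (nn:ℝ) ≤ 88*(M:ℝ)*(k:ℝ) := by exact_mod_cast hnn88
    rw [div_le_div_iff₀ (by linarith) hnpos]
    calc Real.log 2 * nn ≤ Real.log 2 * (88*(M:ℝ)*(k:ℝ)) := by nlinarith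
      _ = ((k:ℝ) * Real.log 2) * (88*(M:ℝ)) := by ring
      _ ≤ Real.log (sepNum (⇑f) nn δ) * (88*(M:ℝ)) := by nlinarith
  -- Step 5: conclude via the limsup and the supremum
  have hlimsup : ((Real.log 2 / (88*(M:ℝ)) : ℝ) : EReal) ≤
      Filter.limsup (fun n : ℕ => ((Real.log (sepNum (⇑f) n δ) / n : ℝ) : EReal))
        Filter.atTop := by
    apply Filter.le_limsup_of_frequently_le'
    apply Filter.Eventually.frequently
    filter_upwards [Filter.eventually_atTop.mpr ⟨88*M+2, fun nn hnn => hev nn hnn⟩] with nn h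
    exact EReal.coe_le_coe_iff.mpr h
  have h0 : (0:EReal) < ((Real.log 2 / (88*(M:ℝ)) : ℝ) : EReal) := EReal.coe_pos.mpr hc
  have hfin : Filter.limsup (fun n : ℕ => ((Real.log (sepNum (⇑f) n δ) / n : ℝ) : EReal))
      Filter.atTop ≤ topEnt (⇑f) :=
    le_iSup₂ (f := fun (ε : ℝ) (_ : 0 < ε) =>
      Filter.limsup (fun n : ℕ => ((Real.log (sepNum (⇑f) n ε) / n : ℝ) : EReal))
        Filter.atTop) δ hδ
  exact lt_of_lt_of_le h0 (le_trans hlimsup hfin)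


end Paper
end

section
/- Let (X,d) be a compact metric space and f : X → X an equicontinuous homeomorphism. Then the following are equivalent: (1) (X,f) is topologically transitive; (2) (X,f) is minimal; (3) (X,f) has the gluing orbit property. -/
open Filter Set Metric

namespace Paper

variable {X : Type*}

/-!
Minimality trivially gives transitivity, and so does gluing (glue two one-point orbit
segments). For an equicontinuous map of a compact space some arbitrarily late iterate is
uniformly close to the identity; this turns two-sided transitivity into density of every
forward orbit. Compactness of `X × X` then bounds the hitting times uniformly, and the orbit
segments are glued greedily along the orbit of the first base point: once the orbit is
`δ`-close to a base point, equicontinuity keeps it `ε`-close along the whole segment.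
-/

lemma zIter_natCast [TopologicalSpace X] (f : X ≃ₜ X) (m : ℕ) (x : X) :
    zIter f (m : ℤ) x = (⇑f)^[m] x := by
  simp [zIter]

lemma exists_add_le_dist_lt {Y : Type*} [PseudoMetricSpace Y] [CompactSpace Y] (u : ℕ → Y)
    {ε : ℝ} (hε : 0 < ε) (L : ℕ) : ∃ m n, m + L ≤ n ∧ dist (u n) (u m) < ε := by
  obtain ⟨a, -, φ, hφ, hlim⟩ := isCompact_univ.tendsto_subseq (x := u) fun _ => mem_univ _
  obtain ⟨N, hN⟩ := Metric.cauchySeq_iff'.1 hlim.cauchySeq ε hε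
  have hφL := hφ.add_le_nat L N
  exact ⟨φ N, φ (L + N), by omega, hN _ (Nat.le_add_left N L)⟩

namespace EquicontinuousSystem

variable [MetricSpace X] [CompactSpace X]

/-- Equicontinuity reduces the comparison to a finite `δ`-net, whose orbit lives in a compact
product. -/
lemma exists_iterates_uniformly_close {f : X → X} (heq : EquicontinuousSystem f)
    {ε : ℝ} (hε : 0 < ε) (L : ℕ) :
    ∃ m n, m + L ≤ n ∧ ∀ x, dist (f^[n] x) (f^[m] x) < ε := by
  obtain ⟨δ, hδ, hδε⟩ := heq (ε / 3) (by positivity)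
  obtain ⟨t, -, ht, hcover⟩ := (isCompact_univ (X := X)).finite_cover_balls hδ
  have := ht.fintype
  obtain ⟨m, n, hmn, hclose⟩ :=
    exists_add_le_dist_lt (fun k (i : t) => f^[k] (i : X)) (by positivity : 0 < ε / 3) L
  refine ⟨m, n, hmn, fun x => ?_⟩
  obtain ⟨i, hi, hxi⟩ := mem_iUnion₂.1 (hcover (mem_univ x))
  have hn := hδε x i hxi n
  have hm := hδε i x (by rwa [dist_comm]) m
  have hi := (dist_le_pi_dist _ _ ⟨i, hi⟩).trans_lt hclose
  linarith [dist_triangle4 (f^[n] x) (f^[n] i) (f^[m] i) (f^[m] x)]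

lemma exists_uniform_return {f : X → X} (heq : EquicontinuousSystem f)
    (hf : Function.Surjective f) {ε : ℝ} (hε : 0 < ε) (L : ℕ) :
    ∃ N ≥ L, ∀ y, dist (f^[N] y) y < ε := by
  obtain ⟨m, n, hmn, hclose⟩ := heq.exists_iterates_uniformly_close hε L
  refine ⟨n - m, by omega, fun y => ?_⟩
  obtain ⟨x, rfl⟩ := hf.iterate m y
  rw [← Function.iterate_add_apply, Nat.sub_add_cancel (by omega)]
  exact hclose x

lemma exists_iterate_zIter_near {f : X ≃ₜ X} (heq : EquicontinuousSystem f) (n : ℤ) (z : X)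
    {ε : ℝ} (hε : 0 < ε) : ∃ m : ℕ, dist ((⇑f)^[m] (zIter f n z)) z < ε := by
  rcases le_or_gt 0 n with hn | hn
  · obtain ⟨N, hN, hret⟩ := heq.exists_uniform_return f.surjective hε n.toNat
    refine ⟨N - n.toNat, ?_⟩
    rw [zIter, if_pos hn, ← Function.iterate_add_apply, Nat.sub_add_cancel hN]
    exact hret z
  · refine ⟨(-n).toNat, ?_⟩
    have hinv : Function.RightInverse (⇑f.symm) f := f.apply_symm_apply
    rw [zIter, if_neg hn.not_ge, hinv.iterate _ z, dist_self]
    exact hε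

end EquicontinuousSystem

/-- A backward or forward visit is converted into a forward one by uniform recurrence. -/
lemma TopTransitive.denseRange_iterate [MetricSpace X] [CompactSpace X] {f : X ≃ₜ X}
    (ht : TopTransitive f) (heq : EquicontinuousSystem f) (x : X) :
    DenseRange fun m : ℕ => (⇑f)^[m] x := by
  refine Metric.denseRange_iff.2 fun y r hr => ?_
  obtain ⟨δ, hδ, hδr⟩ := heq (r / 3) (by positivity)
  obtain ⟨n, z, hzy, hnz⟩ := ht _ _ isOpen_ball isOpen_ball
    ⟨y, mem_ball_self (by positivity : 0 < r / 3)⟩ ⟨x, mem_ball_self hδ⟩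
  obtain ⟨m, hm⟩ := heq.exists_iterate_zIter_near n z (by positivity : 0 < r / 3)
  have hx := hδr x (zIter f n z) (by rw [dist_comm]; exact hnz) m
  have hzy : dist z y < r / 3 := hzy
  refine ⟨m, ?_⟩
  linarith [dist_triangle4 y z ((⇑f)^[m] (zIter f n z)) ((⇑f)^[m] x), dist_comm y z,
    dist_comm z ((⇑f)^[m] (zIter f n z)), dist_comm ((⇑f)^[m] (zIter f n z)) ((⇑f)^[m] x)]

lemma minimal_of_denseRange_iterate [TopologicalSpace X] (f : X ≃ₜ X)
    (hd : ∀ x, DenseRange fun m : ℕ => (⇑f)^[m] x) : Minimal f := fun x =>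
  (hd x).mono (by rintro _ ⟨m, rfl⟩; exact ⟨m, zIter_natCast f m x⟩)

lemma Minimal.topTransitive [TopologicalSpace X] {f : X ≃ₜ X} (hmin : Minimal f) :
    TopTransitive f := by
  intro U V _ hV ⟨x, hx⟩ hVne
  obtain ⟨_, ⟨n, rfl⟩, hn⟩ := (hmin x).exists_mem_open hV hVne
  exact ⟨n, x, hx, hn⟩

lemma GluingOrbit.topTransitive [MetricSpace X] {f : X ≃ₜ X} (hg : GluingOrbit f) :
    TopTransitive f := by
  intro U V hU hV ⟨u, hu⟩ ⟨v, hv⟩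
  obtain ⟨εu, hεu, hbu⟩ := Metric.isOpen_iff.1 hU u hu
  obtain ⟨εv, hεv, hbv⟩ := Metric.isOpen_iff.1 hV v hv
  obtain ⟨M, -, hM⟩ := hg (min εu εv) (lt_min hεu hεv)
  let C : ℕ → X × ℕ := fun j => (if j = 0 then u else v, 1)
  obtain ⟨g, -, z, hz⟩ := hM 2 two_pos C fun _ _ => one_pos
  have hzu : dist z u < min εu εv := by simpa [C, sTimes] using hz 0 two_pos 0 one_pos
  have hzv : dist ((⇑f)^[g 0] z) v < min εu εv := by
    simpa [C, sTimes] using hz 1 one_lt_two 0 one_pos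
  refine ⟨g 0, z, hbu (hzu.trans_le (min_le_left _ _)), ?_⟩
  rw [mem_preimage, zIter_natCast]
  exact hbv (hzv.trans_le (min_le_right _ _))

lemma exists_uniform_hitting_time [MetricSpace X] [CompactSpace X] {f : X → X}
    (hf : Continuous f) (hd : ∀ x, DenseRange fun m : ℕ => f^[m] x) {δ : ℝ} (hδ : 0 < δ) :
    ∃ M : ℕ, ∀ v y, ∃ t ≤ M, dist (f^[t] v) y < δ := by
  have hcover : (univ : Set (X × X)) ⊆ ⋃ t : ℕ, {p | dist (f^[t] p.1) p.2 < δ} := by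
    rintro ⟨v, y⟩ -
    obtain ⟨t, ht⟩ := Metric.denseRange_iff.1 (hd v) y δ hδ
    exact mem_iUnion.2 ⟨t, (dist_comm _ _).trans_lt ht⟩
  obtain ⟨s, hs⟩ := isCompact_univ.elim_finite_subcover _
    (fun t => isOpen_lt (((hf.iterate t).comp continuous_fst).dist continuous_snd)
      continuous_const) hcover
  obtain ⟨M, hM⟩ := s.exists_nat_subset_range
  refine ⟨M, fun v y => ?_⟩
  obtain ⟨t, hts, ht⟩ := mem_iUnion₂.1 (hs (mem_univ (v, y)))
  exact ⟨t, (Finset.mem_range.1 (hM hts)).le, ht⟩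

/-- Follow the orbit of `(C 0).1`: after the `j`-th block it waits `T` steps, until it comes
close to the next base point. -/
def hittingSchedule (f : X → X) (T : X → X → ℕ) (C : ℕ → X × ℕ) : ℕ → ℕ
  | 0 => 0
  | j + 1 => hittingSchedule f T C j + (C j).2 +
      T (f^[hittingSchedule f T C j + (C j).2] (C 0).1) (C (j + 1)).1

lemma gluingOrbit_of_uniform_hitting_time [MetricSpace X] {f : X → X}
    (heq : EquicontinuousSystem f)
    (hhit : ∀ δ > 0, ∃ M : ℕ, ∀ v y, ∃ t ≤ M, dist (f^[t] v) y < δ) : GluingOrbit f := by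
  intro ε hε
  obtain ⟨δ, hδ, hδε⟩ := heq ε hε
  obtain ⟨M, hM⟩ := hhit δ hδ
  choose T hTM hT using hM
  refine ⟨M + 1, M.succ_pos, fun k _ C _ => ?_⟩
  let s := hittingSchedule f T C
  let g : ℕ → ℕ := fun j => T (f^[s j + (C j).2] (C 0).1) (C (j + 1)).1 + 1
  have hsg : ∀ j, sTimes C g j = s j := by
    intro j
    induction j with
    | zero => rfl
    | succ j ih => simp only [sTimes, ih, g, s, hittingSchedule]; omega
  have hnear : ∀ j, dist (f^[s j] (C 0).1) (C j).1 < δ := by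
    rintro (_ | j)
    · simpa [s, hittingSchedule] using hδ
    · simp only [s, hittingSchedule]
      rw [add_comm, Function.iterate_add_apply]
      exact hT _ _
  refine ⟨g, fun j _ => ⟨Nat.succ_pos _, by simpa [g] using hTM _ _⟩, (C 0).1, fun j _ l _ => ?_⟩
  rw [hsg, add_comm, Function.iterate_add_apply]
  exact hδε _ _ (hnear j) l

theorem stmt2 [MetricSpace X] [CompactSpace X] (f : X ≃ₜ X)
    (heq : EquicontinuousSystem (⇑f)) :
    (TopTransitive f ↔ Minimal f) ∧ (Minimal f ↔ GluingOrbit (⇑f)) := by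
  have hmin : TopTransitive f → Minimal f := fun ht =>
    minimal_of_denseRange_iterate f (ht.denseRange_iterate heq)
  refine ⟨⟨hmin, Minimal.topTransitive⟩, fun hm => ?_, fun hg => hmin hg.topTransitive⟩
  exact gluingOrbit_of_uniform_hitting_time heq fun δ hδ =>
    exists_uniform_hitting_time f.continuous (hm.topTransitive.denseRange_iterate heq) hδ

end Paper
end

section
/- Let (X,d) be a compact metric space and f : X → X a homeomorphism with the gluing orbit property, witnessed at scale ε' > 0 by the constant M(ε') ∈ ℤ⁺ (i.e., every finite orbit sequence can be ε'-shadowed with all gaps at most M(ε')). Then for every ε > ε' and every infinite orbit sequence 𝒞 = {(x_j, m_j) ∈ X × ℤ⁺ : j ∈ ℤ⁺} there exist a gap sequence 𝔤 = {t_j ∈ ℤ⁺ : j ∈ ℤ⁺} with t_j ≤ M(ε') for all j, and a point z ∈ X, such that for every j ∈ ℤ⁺ and every l = 0,1,…,m_j−1 one has d(f^{s_j+l}(z), f^l(x_j)) ≤ ε, where s_1 = 0 and s_j = Σ_{i=1}^{j−1}(m_i + t_i − 1) for j ≥ 2. -/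
open Filter Set Metric

namespace Paper

variable {X : Type*}

lemma sTimes_congr {X : Type*} (C : ℕ → X × ℕ) {g g' : ℕ → ℕ} :
    ∀ j, (∀ i < j, g i = g' i) → sTimes C g j = sTimes C g' j
  | 0, _ => rfl
  | j + 1, h => by
    simp only [sTimes, sTimes_congr C j (fun i hi => h i (hi.trans (Nat.lt_succ_self j))),
      h j (Nat.lt_succ_self j)]

theorem stmt3 [MetricSpace X] [CompactSpace X] (f : X ≃ₜ X)
    (ε' : ℝ) (hε' : 0 < ε') (M : ℕ) (hM : 0 < M)
    (hglue : ∀ k : ℕ, 0 < k → ∀ C : ℕ → X × ℕ, (∀ j < k, 0 < (C j).2) →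
      ∃ g : ℕ → ℕ, (∀ j < k - 1, 0 < g j ∧ g j ≤ M) ∧ ∃ z : X, Shadows (⇑f) k C g ε' z) :
    ∀ ε : ℝ, ε' < ε → ∀ C : ℕ → X × ℕ, (∀ j : ℕ, 0 < (C j).2) →
      ∃ g : ℕ → ℕ, (∀ j : ℕ, 0 < g j ∧ g j ≤ M) ∧
        ∃ z : X, ∀ j : ℕ, ∀ l < (C j).2,
          dist ((⇑f)^[sTimes C g j + l] z) ((⇑f)^[l] (C j).1) ≤ ε := by
  intro ε hε C hC
  have hex : ∀ k : ℕ, ∃ p : (ℕ → ℕ) × X,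
      (∀ j < k, 0 < p.1 j ∧ p.1 j ≤ M) ∧ Shadows (⇑f) (k + 1) C p.1 ε' p.2 := by
    intro k
    obtain ⟨g, hg, z, hz⟩ := hglue (k + 1) (Nat.succ_pos k) C (fun j _ => hC j)
    exact ⟨(g, z), by simpa using hg, hz⟩
  choose P hP1 hP2 using hex
  set G : ℕ → ℕ → ℕ := fun k j => if j < k then (P k).1 j else 1 with hG
  have hGbound : ∀ k j, 0 < G k j ∧ G k j ≤ M := by
    intro k j
    by_cases h : j < k
    · simp only [hG, if_pos h]; exact hP1 k j h
    · simp only [hG, if_neg h]; exact ⟨one_pos, hM⟩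
  have hGshad : ∀ k, Shadows (⇑f) (k + 1) C (G k) ε' (P k).2 := by
    intro k j hj l hl
    have hs : sTimes C (G k) j = sTimes C (P k).1 j :=
      sTimes_congr C j (fun i hi => by
        simp only [hG]; rw [if_pos (lt_of_lt_of_le hi (Nat.lt_succ_iff.mp hj))])
    rw [hs]; exact hP2 k j hj l hl
  obtain ⟨U, hU⟩ := Filter.exists_ultrafilter_le (Filter.atTop : Filter ℕ)
  have hgap : ∀ j : ℕ, ∃ v : ℕ, 0 < v ∧ v ≤ M ∧ {k | G k j = v} ∈ U := by
    intro j
    have hmem : {k : ℕ | j < k} ∈ U := hU (Filter.eventually_gt_atTop j)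
    have hsub : {k : ℕ | j < k} ⊆ ⋃ v ∈ Set.Icc 1 M, {k | G k j = v} := by
      intro k _
      exact Set.mem_biUnion ⟨(hGbound k j).1, (hGbound k j).2⟩ rfl
    have hU2 : (⋃ v ∈ Set.Icc 1 M, {k | G k j = v}) ∈ U := U.toFilter.mem_of_superset hmem hsub
    rw [Ultrafilter.finite_biUnion_mem_iff (Set.finite_Icc 1 M)] at hU2
    obtain ⟨v, hv, hv2⟩ := hU2
    exact ⟨v, hv.1, hv.2, hv2⟩
  choose t ht1 ht2 ht3 using hgap
  obtain ⟨z0, -, hz0⟩ := isCompact_univ.ultrafilter_le_nhds (U.map fun k => (P k).2)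
    (le_principal_iff.mpr Filter.univ_mem)
  rw [Ultrafilter.coe_map, Filter.map_le_iff_le_comap, ← Filter.tendsto_iff_comap] at hz0
  refine ⟨t, fun j => ⟨ht1 j, ht2 j⟩, z0, ?_⟩
  intro j l hl
  set n := sTimes C t j + l with hn
  have hEv : ∀ᶠ k in ↑U, dist ((⇑f)^[n] ((P k).2)) ((⇑f)^[l] (C j).1) < ε' := by
    have hA : ∀ᶠ k in (↑U : Filter ℕ), ∀ i ∈ Finset.range j, G k i = t i := by
      rw [Filter.eventually_all_finset]
      intro i _
      exact ht3 i
    have hjk : ∀ᶠ k in (↑U : Filter ℕ), j < k := hU (Filter.eventually_gt_atTop j)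
    filter_upwards [hA, hjk] with k hk hjk'
    have hs : sTimes C t j = sTimes C (G k) j :=
      sTimes_congr C j (fun i hi => (hk i (Finset.mem_range.mpr hi)).symm)
    have h2 := hGshad k j (by omega) l hl
    rw [hn, hs]
    exact h2
  have h1 : Filter.Tendsto (fun k => (⇑f)^[n] ((P k).2)) ↑U (nhds ((⇑f)^[n] z0)) :=
    ((f.continuous.iterate n).tendsto z0).comp hz0
  have h2 : Filter.Tendsto (fun k => dist ((⇑f)^[n] ((P k).2)) ((⇑f)^[l] (C j).1)) ↑U
      (nhds (dist ((⇑f)^[n] z0) ((⇑f)^[l] (C j).1))) :=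
    h1.dist tendsto_const_nhds
  have := le_of_tendsto h2 (hEv.mono fun k h => h.le)
  exact this.trans hε.le

end Paper
end

section
/- Let (X,d) be a compact metric space and f : X → X a homeomorphism with the specification property, witnessed at scale ε > 0 by the constant M(ε) ∈ ℤ⁺. If there exists a subset E ⊆ X that is (1,3ε)-separated with |E| = N ≥ 2, then the topological entropy satisfies h(f) ≥ (ln N)/M(ε). -/
open Filter Set Metric

namespace Paper

variable {X : Type*}

lemma sepSet_bddAbove [MetricSpace X] [CompactSpace X] (f : X → X) (n : ℕ) (hn : 0 < n)
    (ε : ℝ) (hε : 0 < ε) :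
    BddAbove {N : ℕ | ∃ E : Finset X, IsSepSet f n ε ↑E ∧ E.card = N} := by
  obtain ⟨t, htf, hcov⟩ := totallyBounded_iff.mp
    (isCompact_univ (X := Fin n → X)).totallyBounded (ε / 2) (by linarith)
  classical
  refine ⟨htf.toFinset.card, fun N hN => ?_⟩
  obtain ⟨E, hE, rfl⟩ := hN
  set F : X → (Fin n → X) := fun x k => f^[(k : ℕ)] x with hF
  have hc : ∀ x : X, ∃ c ∈ t, F x ∈ ball c (ε / 2) := by
    intro x
    have := hcov (mem_univ (F x))
    simpa using this
  choose c hct hcb using hc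
  refine Finset.card_le_card_of_injOn (fun x => c x) (fun x hx => htf.mem_toFinset.mpr (hct x)) ?_
  intro x hx y hy hxy
  by_contra hne
  obtain ⟨k, hk, hd⟩ := hE x (by simpa using hx) y (by simpa using hy) hne
  have h1 : dist (F x) (F y) < ε := by
    have hxy' : c x = c y := hxy
    calc dist (F x) (F y) ≤ dist (F x) (c y) + dist (c y) (F y) := dist_triangle _ _ _
    _ = dist (F x) (c x) + dist (c y) (F y) := by rw [hxy']
    _ < ε / 2 + ε / 2 := by
          have hb1 := mem_ball.mp (hcb x)
          have hb2 := mem_ball.mp (hcb y)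
          have hb2' : dist (c y) (F y) < ε / 2 := by rw [dist_comm]; exact hb2
          exact add_lt_add hb1 hb2' 
    _ = ε := by ring
  have h2 : dist (F x ⟨k, hk⟩) (F y ⟨k, hk⟩) ≤ dist (F x) (F y) := dist_le_pi_dist _ _ _
  simp only [hF] at h2
  linarith

lemma pow_le_sepNum [MetricSpace X] [CompactSpace X] (f : X ≃ₜ X)
    (ε : ℝ) (hε : 0 < ε) (M : ℕ) (hM : 0 < M) (hspec : SpecWith (⇑f) ε M)
    (E : Finset X) (hsep : IsSepSet (⇑f) 1 (3 * ε) ↑E)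
    (m : ℕ) (hm : 0 < m) :
    E.card ^ m ≤ sepNum (⇑f) (m * M) ε := by
  classical
  -- extend a word to ℕ → X
  set ext : (Fin m → E) → ℕ → X := fun w j => if h : j < m then (w ⟨j, h⟩ : X) else (w ⟨0, hm⟩ : X)
    with hext
  set C : (Fin m → E) → ℕ → X × ℕ := fun w j => (ext w j, 1) with hC
  set g : ℕ → ℕ := fun _ => M with hg
  have hsT : ∀ w : Fin m → E, ∀ j : ℕ, sTimes (C w) g j = j * M := by
    intro w j
    induction j with
    | zero => simp [sTimes]
    | succ j ih =>
        show sTimes (C w) g j + (C w j).2 + g j - 1 = (j + 1) * M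
        rw [ih]
        simp only [hC, hg]
        ring_nf
        omega
  have hz : ∀ w : Fin m → E, ∃ z : X, Shadows (⇑f) m (C w) g ε z := by
    intro w
    exact hspec m hm (C w) (fun j hj => one_pos) g (fun j hj => le_refl M)
  choose z hzs using hz
  have key : ∀ w : Fin m → E, ∀ j : Fin m, dist ((⇑f)^[(j : ℕ) * M] (z w)) ((w j : X)) < ε := by
    intro w j
    have := hzs w j j.2 0 one_pos
    rw [hsT] at this
    simpa [hC, hext, j.2, Fin.eta] using this
  -- distinct words give ε-separated points
  have sep : ∀ w w' : Fin m → E, w ≠ w' →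
      ∃ k < m * M, ε < dist ((⇑f)^[k] (z w)) ((⇑f)^[k] (z w')) := by
    intro w w' hne
    obtain ⟨j, hj⟩ : ∃ j : Fin m, w j ≠ w' j := by
      by_contra h
      push_neg at h
      exact hne (funext h)
    have hxne : ((w j : X)) ≠ ((w' j : X)) := fun h => hj (Subtype.coe_injective h)
    obtain ⟨k, hk1, hd⟩ := hsep (w j) (w j).2 (w' j) (w' j).2 hxne
    interval_cases k
    simp only [Function.iterate_zero, id] at hd
    refine ⟨(j : ℕ) * M, (Nat.mul_lt_mul_right hM).mpr j.2, ?_⟩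
    have h1 := key w j
    have h2 := key w' j
    have htr := dist_triangle4 ((w j : X)) ((⇑f)^[(j : ℕ) * M] (z w))
      ((⇑f)^[(j : ℕ) * M] (z w')) ((w' j : X))
    have hcm : dist ((w j : X)) ((⇑f)^[(j : ℕ) * M] (z w))
        = dist ((⇑f)^[(j : ℕ) * M] (z w)) ((w j : X)) := dist_comm _ _
    linarith
  have hinj : Function.Injective z := by
    intro w w' h
    by_contra hne
    obtain ⟨k, _, hd⟩ := sep w w' hne
    rw [h] at hd
    simp at hd
    linarith
  set Z : Finset X := Finset.image z Finset.univ with hZ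
  have hZsep : IsSepSet (⇑f) (m * M) ε ↑Z := by
    intro x hx y hy hxy
    simp only [hZ, Finset.coe_image, Set.mem_image] at hx hy
    obtain ⟨w, -, rfl⟩ := hx
    obtain ⟨w', -, rfl⟩ := hy
    exact sep w w' (fun h => hxy (congrArg z h))
  have hZcard : Z.card = E.card ^ m := by
    rw [hZ, Finset.card_image_of_injective _ hinj, Finset.card_univ]
    simp [Fintype.card_fun, Fintype.card_coe]
  exact le_csSup (sepSet_bddAbove (⇑f) (m * M) (by positivity) ε hε) ⟨Z, hZsep, hZcard⟩

theorem stmt4 [MetricSpace X] [CompactSpace X] (f : X ≃ₜ X)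
    (ε : ℝ) (hε : 0 < ε) (M : ℕ) (hM : 0 < M) (hspec : SpecWith (⇑f) ε M)
    (E : Finset X) (hsep : IsSepSet (⇑f) 1 (3 * ε) ↑E)
    (N : ℕ) (hcard : E.card = N) (hN : 2 ≤ N) :
    ((Real.log N / M : ℝ) : EReal) ≤ topEnt (⇑f) := by
  have hNpos : (0:ℝ) < N := by exact_mod_cast Nat.lt_of_lt_of_le Nat.zero_lt_two hN
  have hlogN : 0 ≤ Real.log N := Real.log_nonneg (by exact_mod_cast hN.trans' one_le_two)
  have hMpos : (0:ℝ) < M := by exact_mod_cast hM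
  have key : ∀ m : ℕ, 0 < m →
      ((Real.log N / M : ℝ) : EReal) ≤
        ((Real.log (sepNum (⇑f) (m * M) ε) / ((m * M : ℕ) : ℝ) : ℝ) : EReal) := by
    intro m hm
    have h1 : E.card ^ m ≤ sepNum (⇑f) (m * M) ε :=
      pow_le_sepNum f ε hε M hM hspec E hsep m hm
    rw [hcard] at h1
    have h2 : (N:ℝ) ^ m ≤ (sepNum (⇑f) (m * M) ε : ℝ) := by exact_mod_cast h1
    have hmpos : (0:ℝ) < m := by exact_mod_cast hm
    have h3 : (m : ℝ) * Real.log N ≤ Real.log (sepNum (⇑f) (m * M) ε) := by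
      calc (m : ℝ) * Real.log N = Real.log ((N:ℝ) ^ m) := by rw [Real.log_pow]
      _ ≤ _ := Real.log_le_log (by positivity) h2
    rw [EReal.coe_le_coe_iff]
    rw [div_le_div_iff₀ hMpos (by positivity)]
    push_cast
    nlinarith [h3, hMpos.le]
  have hlim : ((Real.log N / M : ℝ) : EReal) ≤
      Filter.limsup (fun n : ℕ => ((Real.log (sepNum (⇑f) n ε) / n : ℝ) : EReal))
        Filter.atTop := by
    refine Filter.le_limsup_of_frequently_le ?_ (Filter.isBoundedUnder_of ⟨⊤, fun n => le_top⟩)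
    rw [Filter.frequently_atTop]
    intro n₀
    refine ⟨max n₀ 1 * M, ?_, key (max n₀ 1) (le_max_right n₀ 1)⟩
    calc n₀ ≤ max n₀ 1 := le_max_left n₀ 1
    _ ≤ max n₀ 1 * M := Nat.le_mul_of_pos_right _ hM
  calc ((Real.log N / M : ℝ) : EReal) ≤ _ := hlim
  _ ≤ topEnt (⇑f) := le_iSup₂_of_le ε hε le_rfl


end Paper
end

section
/- Let (X,d) be a compact metric space and f : X → X a homeomorphism with the specification property. If X is not a singleton, then the topological entropy of f is positive: h(f) > 0. -/
open Filter Set Metric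

namespace Paper

variable {X : Type*}

/-!
Two points `a ≠ b` at distance `4ε` give, through specification at scale `ε` with gap `M`,
for every binary word `w` of length `n` a point whose orbit visits the `ε`-ball around `a`
or `b` at times `0, M, …, (n-1)M` as `w` prescribes. These `2ⁿ` points are
`(nM, ε)`-separated, so `s(nM, ε) ≥ 2ⁿ` and `h(f) ≥ log 2 / M > 0`.
-/

lemma sTimes_eq_mul_of_snd_eq_one (C : ℕ → X × ℕ) (M : ℕ) (hC : ∀ j, (C j).2 = 1) (j : ℕ) :
    sTimes C (fun _ => M) j = j * M := by
  induction j with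
  | zero => simp [sTimes]
  | succ j ih => rw [sTimes, ih, hC, Nat.succ_mul]; omega

section Separated

variable [MetricSpace X] [CompactSpace X] (f : X → X) (n : ℕ) {ε : ℝ}

/-- Two points of an `(n, ε)`-separated set cannot have the same itinerary through a cover by
`ε/2`-balls, so their number is at most (number of balls)ⁿ. -/
lemma exists_card_le_of_isSepSet (hε : 0 < ε) :
    ∃ B : ℕ, ∀ E : Finset X, IsSepSet f n ε ↑E → E.card ≤ B := by
  classical
  obtain ⟨t, -, htf, hcover⟩ :=
    finite_cover_balls_of_compact (isCompact_univ (X := X)) (half_pos hε)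
  have hcentre : ∀ x : X, ∃ c ∈ t, dist x c < ε / 2 := fun x => by
    simpa using hcover (mem_univ x)
  choose c hct hc using hcentre
  have := htf.fintype
  refine ⟨Fintype.card (Fin n → t), fun E hE => ?_⟩
  let itinerary : X → Fin n → t := fun x k => ⟨c (f^[k] x), hct _⟩
  have hinj : InjOn itinerary E := by
    intro x hx y hy hxy
    by_contra hne
    obtain ⟨k, hk, hsep⟩ := hE x hx y hy hne
    have hsame : c (f^[k] x) = c (f^[k] y) := congrArg Subtype.val (congrFun hxy ⟨k, hk⟩)
    have hx' := hc (f^[k] x)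
    have hy' := hc (f^[k] y)
    rw [hsame] at hx'
    linarith [dist_triangle_right (f^[k] x) (f^[k] y) (c (f^[k] y))]
  simpa using Finset.card_le_card_of_injOn itinerary (fun _ _ => Finset.mem_univ _) hinj

lemma card_le_sepNum (hε : 0 < ε) {E : Finset X} (hE : IsSepSet f n ε ↑E) :
    E.card ≤ sepNum f n ε := by
  obtain ⟨B, hB⟩ := exists_card_le_of_isSepSet f n hε
  exact le_csSup ⟨B, by rintro _ ⟨E', hE', rfl⟩; exact hB E' hE'⟩ ⟨E, hE, rfl⟩

end Separated

lemma SpecWith.exists_dist_iterate_mul_lt [MetricSpace X] {f : X → X} {ε : ℝ} {M n : ℕ}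
    (h : SpecWith f ε M) (hn : 0 < n) (p : Fin n → X) :
    ∃ z : X, ∀ j : Fin n, dist (f^[j * M] z) (p j) < ε := by
  let C : ℕ → X × ℕ := fun j => (if hj : j < n then p ⟨j, hj⟩ else p ⟨0, hn⟩, 1)
  obtain ⟨z, hz⟩ := h n hn C (fun _ _ => Nat.one_pos) (fun _ => M) (fun _ _ => le_rfl)
  refine ⟨z, fun j => ?_⟩
  simpa [C, sTimes_eq_mul_of_snd_eq_one C M (fun _ => rfl)] using hz j j.2 0 Nat.one_pos

/-- Points shadowing `j ↦ q (w j)` for two words `w`, `w'` differing at `j` are more than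
`3ε - 2ε = ε` apart at time `jM`. -/
lemma SpecWith.card_pow_le_sepNum [MetricSpace X] [CompactSpace X] {f : X → X} {ε : ℝ}
    {M n : ℕ} (h : SpecWith f ε M) (hε : 0 < ε) (hM : 0 < M) (hn : 0 < n)
    {ι : Type*} [Fintype ι] {q : ι → X} (hq : Pairwise fun i i' => 3 * ε < dist (q i) (q i')) :
    Fintype.card ι ^ n ≤ sepNum f (n * M) ε := by
  classical
  choose z hz using fun w : Fin n → ι => h.exists_dist_iterate_mul_lt hn fun j => q (w j)
  have hfar : ∀ w w', w ≠ w' → ∃ j : Fin n, ε < dist (f^[j * M] (z w)) (f^[j * M] (z w')) := by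
    intro w w' hne
    obtain ⟨j, hj⟩ := Function.ne_iff.mp hne
    refine ⟨j, ?_⟩
    have := dist_triangle4 (q (w j)) (f^[j * M] (z w)) (f^[j * M] (z w')) (q (w' j))
    linarith [hq hj, hz w j, hz w' j, dist_comm (q (w j)) (f^[j * M] (z w)),
      dist_comm (q (w' j)) (f^[j * M] (z w'))]
  have hinj : Function.Injective z := fun w w' hzw => by
    by_contra hne
    obtain ⟨j, hj⟩ := hfar w w' hne
    rw [hzw, dist_self] at hj
    linarith
  have hsep : IsSepSet f (n * M) ε ↑(Finset.univ.image z) := by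
    simp only [Finset.coe_image, Finset.coe_univ, image_univ]
    rintro _ ⟨w, rfl⟩ _ ⟨w', rfl⟩ hne
    obtain ⟨j, hj⟩ := hfar w w' (ne_of_apply_ne z hne)
    exact ⟨j * M, Nat.mul_lt_mul_of_pos_right j.2 hM, hj⟩
  calc Fintype.card ι ^ n = (Finset.univ.image z).card := by
        rw [Finset.card_image_of_injective _ hinj, Finset.card_univ, Fintype.card_fun,
          Fintype.card_fin]
    _ ≤ sepNum f (n * M) ε := card_le_sepNum f _ hε hsep

lemma le_topEnt_of_pow_le_sepNum [MetricSpace X] {f : X → X} {ε : ℝ} {M r : ℕ} (hε : 0 < ε)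
    (hM : 0 < M) (hr : 0 < r) (h : ∀ n, 0 < n → r ^ n ≤ sepNum f (n * M) ε) :
    ((Real.log r / M : ℝ) : EReal) ≤ topEnt f := by
  refine le_iSup₂_of_le ε hε (Filter.le_limsup_of_frequently_le' ?_)
  refine Filter.frequently_atTop.mpr fun N => ⟨(N + 1) * M, by nlinarith, ?_⟩
  have hlog : ((N + 1 : ℕ) : ℝ) * Real.log r ≤ Real.log (sepNum f ((N + 1) * M) ε) := by
    rw [← Real.log_pow]
    exact Real.log_le_log (by positivity) (by exact_mod_cast h (N + 1) N.succ_pos)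
  refine EReal.coe_le_coe_iff.mpr ?_
  rw [le_div_iff₀ (by positivity)]
  calc Real.log r / M * ((N + 1) * M : ℕ) = (N + 1 : ℕ) * Real.log r := by
        push_cast; field_simp
    _ ≤ _ := hlog

theorem stmt5 [MetricSpace X] [CompactSpace X] [Nontrivial X] (f : X ≃ₜ X)
    (hspec : Specification (⇑f)) :
    0 < topEnt (⇑f) := by
  obtain ⟨a, b, hab⟩ := exists_pair_ne X
  have hε : 0 < dist a b / 4 := div_pos (dist_pos.mpr hab) four_pos
  obtain ⟨M, hM, hspecM⟩ := hspec _ hε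
  have hfar :
      Pairwise fun β β' : Bool => 3 * (dist a b / 4) < dist (cond β a b) (cond β' a b) := by
    have : 3 * (dist a b / 4) < dist a b := by linarith
    rintro (_ | _) (_ | _) hne <;> simp_all [dist_comm]
  have hgrowth := fun (n : ℕ) (hn : 0 < n) => hspecM.card_pow_le_sepNum hε hM hn hfar
  calc (0 : EReal) < ((Real.log (Fintype.card Bool) / M : ℝ) : EReal) := by
        exact_mod_cast div_pos (by simp [Real.log_pos]) (Nat.cast_pos.mpr hM)
    _ ≤ topEnt f := le_topEnt_of_pow_le_sepNum hε hM Fintype.card_pos hgrowth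

end Paper
end

section
/- Let (X,d) be a compact metric space containing at least two points and f : X → X a homeomorphism whose topological entropy h(f) is finite. Suppose M : (0,∞) → ℤ⁺ is a function witnessing the specification property of (X,f). Then liminf_{ε→0} M(ε)/(−ln ε) ≥ (dim X)/h(f), where dim X = liminf_{ε→0} (ln s(1,ε))/(−ln ε) is the lower box dimension of X. -/
open Filter Set Metric

namespace Paper

variable {X : Type*}

lemma bddAbove_sepSets [MetricSpace X] [CompactSpace X] {f : X → X} (hf : Continuous f) (n : ℕ) {ε : ℝ}
    (hε : 0 < ε) :
    BddAbove {N : ℕ | ∃ E : Finset X, IsSepSet f n ε ↑E ∧ E.card = N} := by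
  have hF : Continuous (fun x : X => fun k : Fin n => f^[(k : ℕ)] x) :=
    continuous_pi fun k => hf.iterate _
  have hUC := CompactSpace.uniformContinuous_of_continuous hF
  rw [Metric.uniformContinuous_iff] at hUC
  obtain ⟨δ, hδ, hδ'⟩ := hUC ε hε
  have hsep : ∀ E : Finset X, IsSepSet f n ε ↑E → ∀ x ∈ E, ∀ y ∈ E, x ≠ y → δ ≤ dist x y := by
    intro E hE x hx y hy hxy
    by_contra h
    push_neg at h
    obtain ⟨k, hk, hk'⟩ := hE x (by exact_mod_cast hx) y (by exact_mod_cast hy) hxy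
    have h2 := hδ' h
    rw [dist_pi_lt_iff hε] at h2
    exact absurd (h2 ⟨k, hk⟩) (not_lt.2 hk'.le)
  obtain ⟨t, hts, htf, htc⟩ := finite_cover_balls_of_compact (isCompact_univ (X := X))
    (half_pos hδ)
  have hcov : ∀ x : X, ∃ y ∈ t, dist x y < δ / 2 := by
    intro x
    have := htc (mem_univ x)
    simpa [Metric.mem_ball] using this
  choose g hg1 hg2 using hcov
  refine ⟨htf.toFinset.card, ?_⟩
  rintro N ⟨E, hE, rfl⟩
  refine Finset.card_le_card_of_injOn g (fun x _ => htf.mem_toFinset.2 (hg1 x)) ?_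
  intro x hx y hy hxy
  by_contra hne
  have h1 := hsep E hE x (by exact_mod_cast hx) y (by exact_mod_cast hy) hne
  have : dist x y < δ := by
    have t1 := dist_triangle x (g x) y
    have t2 := hg2 x
    have t3 := hg2 y
    have t4 : dist (g x) y = dist y (g y) := by rw [hxy, dist_comm]
    calc dist x y ≤ dist x (g x) + dist (g x) y := t1
    _ < δ / 2 + δ / 2 := by rw [t4]; linarith
    _ = δ := by ring
    _ = δ := by ring
  linarith

lemma le_sepNum [MetricSpace X] [CompactSpace X] {f : X → X} (hf : Continuous f) {n : ℕ} {ε : ℝ} (hε : 0 < ε)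
    {E : Finset X} (hE : IsSepSet f n ε ↑E) : E.card ≤ sepNum f n ε :=
  le_csSup (bddAbove_sepSets hf n hε) ⟨E, hE, rfl⟩

lemma exists_sepNum [MetricSpace X] [CompactSpace X] {f : X → X} (hf : Continuous f) (n : ℕ) {ε : ℝ}
    (hε : 0 < ε) : ∃ E : Finset X, IsSepSet f n ε ↑E ∧ E.card = sepNum f n ε := by
  have h0 : (0 : ℕ) ∈ {N : ℕ | ∃ E : Finset X, IsSepSet f n ε ↑E ∧ E.card = N} :=
    ⟨∅, by simp [IsSepSet], rfl⟩
  exact Nat.sSup_mem ⟨0, h0⟩ (bddAbove_sepSets hf n hε)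


lemma sTimes_const_one [MetricSpace X] {C : ℕ → X × ℕ} (hC : ∀ j, (C j).2 = 1) (M : ℕ) (j : ℕ) :
    sTimes C (fun _ => M) j = j * M := by
  induction j with
  | zero => simp [sTimes]
  | succ j ih => simp only [sTimes, ih, hC]; rw [Nat.succ_mul]; omega

lemma key_pow [MetricSpace X] [CompactSpace X] {f : X → X} (hf : Continuous f) {ε : ℝ} (hε : 0 < ε)
    {M : ℕ} (hspec : SpecWith f ε M) (k : ℕ) (hk : 0 < k) :
    (sepNum f 1 (3 * ε)) ^ k ≤ sepNum f ((k - 1) * M + 1) ε := by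
  classical
  obtain ⟨E, hE, hEcard⟩ := exists_sepNum hf 1 (by linarith : (0:ℝ) < 3 * ε)
  set n := (k - 1) * M + 1 with hn
  -- filler function
  have hEsep : ∀ x ∈ E, ∀ y ∈ E, x ≠ y → 3 * ε < dist x y := by
    intro x hx y hy hxy
    obtain ⟨l, hl, hl'⟩ := hE x (by exact_mod_cast hx) y (by exact_mod_cast hy) hxy
    interval_cases l
    simpa using hl'
  set e : (Fin k → E) → ℕ → X := fun φ j => if h : j < k then (φ ⟨j, h⟩ : X) else (φ ⟨0, hk⟩ : X)
    with he
  have hz : ∀ φ : Fin k → E, ∃ z : X, ∀ j < k, dist (f^[j * M] z) (e φ j) < ε := by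
    intro φ
    obtain ⟨z, hz⟩ := hspec k hk (fun j => (e φ j, 1)) (fun j _ => one_pos)
      (fun _ => M) (fun j _ => le_refl M)
    refine ⟨z, fun j hj => ?_⟩
    have h1 := hz j hj 0 one_pos
    have hs : sTimes (fun j => (e φ j, 1)) (fun _ => M) j = j * M :=
      sTimes_const_one (fun _ => rfl) M j
    simpa [hs] using h1
  choose ζ hζ using hz
  -- separation of the glued points
  have hkey : ∀ φ ψ : Fin k → E, φ ≠ ψ →
      ∃ l < n, ε < dist (f^[l] (ζ φ)) (f^[l] (ζ ψ)) := by
    intro φ ψ hne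
    obtain ⟨j, hj⟩ := Function.ne_iff.1 hne
    have hab : (φ j : X) ≠ (ψ j : X) := fun h => hj (Subtype.ext h)
    have hdist : 3 * ε < dist (φ j : X) (ψ j : X) :=
      hEsep _ (φ j).2 _ (ψ j).2 hab
    refine ⟨(j : ℕ) * M, ?_, ?_⟩
    · have : (j : ℕ) ≤ k - 1 := by omega
      calc (j : ℕ) * M ≤ (k - 1) * M := Nat.mul_le_mul_right M this
      _ < n := by omega
    · have h1 := hζ φ j j.2
      have h2 := hζ ψ j j.2
      have he1 : e φ (j : ℕ) = (φ j : X) := by simp [he, j.2]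
      have he2 : e ψ (j : ℕ) = (ψ j : X) := by simp [he, j.2]
      rw [he1] at h1; rw [he2] at h2
      have := dist_triangle4 (φ j : X) (f^[(j:ℕ) * M] (ζ φ)) (f^[(j:ℕ) * M] (ζ ψ)) (ψ j : X)
      rw [dist_comm (φ j : X) (f^[(j:ℕ) * M] (ζ φ))] at this
      linarith
  have hinj : Function.Injective ζ := by
    intro φ ψ h
    by_contra hne
    obtain ⟨l, _, hl'⟩ := hkey φ ψ hne
    rw [h] at hl'
    simp at hl'
    linarith
  set Z : Finset X := Finset.image ζ Finset.univ with hZ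
  have hZsep : IsSepSet f n ε ↑Z := by
    intro x hx y hy hxy
    simp only [hZ, Finset.coe_image, Set.mem_image] at hx hy
    obtain ⟨φ, _, rfl⟩ := hx
    obtain ⟨ψ, _, rfl⟩ := hy
    exact hkey φ ψ (fun h => hxy (by rw [h]))
  have hZcard : Z.card = (sepNum f 1 (3 * ε)) ^ k := by
    rw [hZ, Finset.card_image_of_injective _ hinj, Finset.card_univ, Fintype.card_fun]
    simp [hEcard, Fintype.card_coe]
  calc (sepNum f 1 (3 * ε)) ^ k = Z.card := hZcard.symm
  _ ≤ sepNum f n ε := le_sepNum hf hε hZsep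

lemma topEnt_nonneg [MetricSpace X] (f : X → X) : 0 ≤ topEnt f := by
  have h1 : (0:EReal) ≤
      Filter.limsup (fun n : ℕ => ((Real.log (sepNum f n 1) / n : ℝ) : EReal)) Filter.atTop := by
    refine le_limsup_of_frequently_le (Frequently.of_forall fun n => ?_)
    have h2 : (0:ℝ) ≤ Real.log (sepNum f n 1) / n :=
      div_nonneg (Real.log_natCast_nonneg _) (Nat.cast_nonneg n)
    exact_mod_cast h2
  exact h1.trans (le_iSup₂ (f := fun (ε : ℝ) (_ : 0 < ε) =>
    Filter.limsup (fun n : ℕ => ((Real.log (sepNum f n ε) / n : ℝ) : EReal)) Filter.atTop)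
    1 one_pos)

lemma topEnt_ne_bot [MetricSpace X] (f : X → X) : topEnt f ≠ ⊥ :=
  ((lt_of_lt_of_le (by simp : (⊥:EReal) < 0) (topEnt_nonneg f))).ne'

lemma log_sep_le_ent [MetricSpace X] [CompactSpace X] {f : X → X} (hf : Continuous f)
    (hfin : topEnt f ≠ ⊤) {ε : ℝ} (hε : 0 < ε) {M : ℕ} (hM : 0 < M)
    (hspec : SpecWith f ε M) :
    Real.log (sepNum f 1 (3 * ε)) ≤ (topEnt f).toReal * M := by
  set N := sepNum f 1 (3 * ε) with hN
  set h' := (topEnt f).toReal with hh'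
  have h'0 : 0 ≤ h' := by
    have := EReal.toReal_le_toReal (topEnt_nonneg f) (by simp) hfin
    simpa using this
  rcases Nat.eq_zero_or_pos N with hN0 | hN0
  · rw [hN0]; simpa using mul_nonneg h'0 (Nat.cast_nonneg M)
  set L := Real.log N with hL
  have hL0 : 0 ≤ L := Real.log_natCast_nonneg N
  have hMR : (1:ℝ) ≤ (M:ℝ) := by exact_mod_cast hM
  have hterm : ∀ k : ℕ, ((L / M : ℝ) : EReal) ≤
      ((Real.log (sepNum f (k*M+1) ε) / (k*M+1 : ℕ) : ℝ) : EReal) := by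
    intro k
    have h1 : N ^ (k+1) ≤ sepNum f (k*M+1) ε := by
      have h2 := key_pow hf hε hspec (k+1) (Nat.succ_pos k)
      simpa using h2
    have h2 : ((k:ℝ)+1) * L ≤ Real.log (sepNum f (k*M+1) ε) := by
      calc ((k:ℝ)+1) * L = Real.log ((N:ℝ) ^ (k+1)) := by
            rw [Real.log_pow]; push_cast; ring
      _ ≤ _ := Real.log_le_log (by positivity) (by exact_mod_cast h1)
    have hden : (0:ℝ) < ((k*M+1 : ℕ) : ℝ) := by positivity
    rw [EReal.coe_le_coe_iff]
    rw [div_le_div_iff₀ (by exact_mod_cast hM) hden]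
    have hcast : ((k*M+1 : ℕ) : ℝ) = (k:ℝ)*(M:ℝ)+1 := by push_cast; ring
    rw [hcast]
    nlinarith [mul_nonneg (sub_nonneg.2 h2) (le_trans zero_le_one hMR),
      mul_nonneg hL0 (sub_nonneg.2 hMR), mul_nonneg (Nat.cast_nonneg k : (0:ℝ) ≤ k) hL0,
      mul_nonneg (mul_nonneg (Nat.cast_nonneg k : (0:ℝ) ≤ k) hL0) (sub_nonneg.2 hMR)]
  have hfreq : ∃ᶠ n in Filter.atTop,
      ((L / M : ℝ) : EReal) ≤ ((Real.log (sepNum f n ε) / n : ℝ) : EReal) := by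
    rw [frequently_atTop]
    intro a
    exact ⟨a*M+1, le_trans (Nat.le_mul_of_pos_right a hM) (Nat.le_succ _), hterm a⟩
  have hlim : ((L / M : ℝ) : EReal) ≤
      Filter.limsup (fun n : ℕ => ((Real.log (sepNum f n ε) / n : ℝ) : EReal)) Filter.atTop :=
    le_limsup_of_frequently_le hfreq
  have hent : ((L / M : ℝ) : EReal) ≤ topEnt f :=
    hlim.trans (le_iSup₂ (f := fun (ε : ℝ) (_ : 0 < ε) =>
      Filter.limsup (fun n : ℕ => ((Real.log (sepNum f n ε) / n : ℝ) : EReal)) Filter.atTop)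
      ε hε)
  rw [← EReal.coe_toReal hfin (topEnt_ne_bot f), EReal.coe_le_coe_iff, ← hh'] at hent
  rw [div_le_iff₀ (by exact_mod_cast hM : (0:ℝ) < (M:ℝ))] at hent
  linarith [hent]


theorem stmt7 [MetricSpace X] [CompactSpace X] [Nontrivial X] (f : X ≃ₜ X)
    (hfin : topEnt (⇑f) ≠ ⊤)
    (M : ℝ → ℕ) (hM : ∀ ε : ℝ, 0 < ε → 0 < M ε ∧ SpecWith (⇑f) ε (M ε)) :
    lowerBoxDim (⇑f) / topEnt (⇑f) ≤
      Filter.liminf (fun ε : ℝ => (((M ε : ℝ) / (-Real.log ε) : ℝ) : EReal))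
        (nhdsWithin 0 (Set.Ioi 0)) := by
  classical
  have hf : Continuous ⇑f := f.continuous
  set F : ℝ → EReal := fun ε => (((M ε : ℝ) / (-Real.log ε) : ℝ) : EReal) with hF
  set R := Filter.liminf F (nhdsWithin 0 (Set.Ioi 0)) with hR
  have hev01 : ∀ᶠ ε in nhdsWithin (0:ℝ) (Set.Ioi 0), ε ∈ Set.Ioo (0:ℝ) 1 :=
    Ioo_mem_nhdsGT_of_mem ⟨le_refl 0, one_pos⟩
  have hR0 : (0:EReal) ≤ R := by
    refine le_liminf_of_le ?_ (hev01.mono fun ε hε => ?_)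
    · isBoundedDefault
    · have hlog : 0 < -Real.log ε := by
        have := Real.log_neg hε.1 hε.2; linarith
      have h2 : (0:ℝ) ≤ (M ε : ℝ) / (-Real.log ε) := div_nonneg (Nat.cast_nonneg _) hlog.le
      simp only [hF]
      exact_mod_cast h2
  set h' := (topEnt ⇑f).toReal with hh'
  have htop : ((h' : ℝ) : EReal) = topEnt ⇑f := EReal.coe_toReal hfin (topEnt_ne_bot ⇑f)
  have h'0 : 0 ≤ h' := by
    have := EReal.toReal_le_toReal (topEnt_nonneg ⇑f) (by simp) hfin
    simpa using this
  have key : ∀ ε : ℝ, 0 < ε → Real.log (sepNum (⇑f) 1 (3*ε)) ≤ h' * (M ε) :=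
    fun ε hε => log_sep_le_ent hf hfin hε (hM ε hε).1 (hM ε hε).2
  rcases eq_or_lt_of_le h'0 with h0 | hpos
  · rw [← htop, ← h0]
    have hz : lowerBoxDim (⇑f) / (((0:ℝ) : ℝ) : EReal) = 0 := by
      rw [EReal.coe_zero, div_eq_mul_inv, EReal.inv_zero, mul_zero]
    rw [hz]
    exact hR0
  · rw [← htop]
    by_contra hcon
    push_neg at hcon
    obtain ⟨b, hbR, hbD⟩ := EReal.exists_between_coe_real hcon
    have hble : (b : EReal) ≤ R := by
      rcases le_or_gt b 0 with hb0 | hb0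
      · exact le_trans (by exact_mod_cast hb0) hR0
      · have hDgt : ((h' * b : ℝ) : EReal) < lowerBoxDim ⇑f := by
          have h1 : ¬ (lowerBoxDim (⇑f) / ((h' : ℝ) : EReal) ≤ (b : EReal)) := not_le.2 hbD
          rw [EReal.div_le_iff_le_mul (by exact_mod_cast hpos) (EReal.coe_ne_top h')] at h1
          rw [EReal.coe_mul]
          exact not_le.1 h1
        obtain ⟨c, hc1, hc2⟩ := EReal.exists_between_coe_real hDgt
        have hcb' : h' * b < c := EReal.coe_lt_coe_iff.1 hc1
        have hc0 : 0 < c := lt_of_le_of_lt (by positivity) hcb'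
        have hev : ∀ᶠ δ in nhdsWithin (0:ℝ) (Set.Ioi 0),
            (c : EReal) < ((Real.log (sepNum (⇑f) 1 δ) / (-Real.log δ) : ℝ) : EReal) :=
          eventually_lt_of_lt_liminf hc2
        have hev2 : ∀ᶠ δ in nhdsWithin (0:ℝ) (Set.Ioi 0),
            c * (-Real.log δ) < Real.log (sepNum (⇑f) 1 δ) := by
          filter_upwards [hev, hev01] with δ h1 h2
          have hlog : 0 < -Real.log δ := by have := Real.log_neg h2.1 h2.2; linarith
          rw [EReal.coe_lt_coe_iff] at h1
          exact (lt_div_iff₀ hlog).1 h1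
        have h3 : Filter.Tendsto (fun ε : ℝ => 3 * ε) (nhdsWithin 0 (Set.Ioi 0))
            (nhdsWithin 0 (Set.Ioi 0)) := by
          rw [tendsto_nhdsWithin_iff]
          constructor
          · have hcont : Filter.Tendsto (fun ε : ℝ => 3 * ε) (nhds 0) (nhds (3 * 0)) :=
              (continuous_const.mul continuous_id).tendsto 0
            rw [mul_zero] at hcont
            exact hcont.mono_left nhdsWithin_le_nhds
          · exact eventually_mem_nhdsWithin.mono fun ε hε => by
              simp only [Set.mem_Ioi] at *; linarith
        have hev3 : ∀ᶠ ε in nhdsWithin (0:ℝ) (Set.Ioi 0),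
            c * (-Real.log (3*ε)) < Real.log (sepNum (⇑f) 1 (3*ε)) := h3.eventually hev2
        have hinf : Filter.Tendsto (fun ε : ℝ => -Real.log ε) (nhdsWithin 0 (Set.Ioi 0))
            Filter.atTop := tendsto_neg_atBot_atTop.comp Real.tendsto_log_nhdsGT_zero
        set A := max 1 ((c * Real.log 3) / (c - b * h')) with hA
        have hcb : 0 < c - b * h' := by nlinarith [hcb']
        have hevA : ∀ᶠ ε in nhdsWithin (0:ℝ) (Set.Ioi 0), A < -Real.log ε :=
          hinf.eventually (Filter.eventually_gt_atTop A)
        have hevb : ∀ᶠ ε in nhdsWithin (0:ℝ) (Set.Ioi 0), (b : EReal) ≤ F ε := by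
          filter_upwards [hev3, hevA, hev01] with ε h1 h2 h3'
          have hεpos : 0 < ε := h3'.1
          have hlog : 0 < -Real.log ε :=
            lt_trans (lt_of_lt_of_le one_pos (le_max_left _ _)) h2
          have hlog3 : Real.log (3*ε) = Real.log 3 + Real.log ε :=
            Real.log_mul (by norm_num) (ne_of_gt hεpos)
          have hkeyε := key ε hεpos
          have hQ : c * (-Real.log ε) - c * Real.log 3 < h' * (M ε : ℝ) := by
            have h4 := lt_of_lt_of_le h1 hkeyε
            rw [hlog3] at h4
            nlinarith [h4]
          have hA2 : (c * Real.log 3) / (c - b * h') < -Real.log ε :=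
            lt_of_le_of_lt (le_max_right _ _) h2
          have hprod : c * Real.log 3 < (-Real.log ε) * (c - b * h') := by
            rw [div_lt_iff₀ hcb] at hA2; linarith [hA2]
          have h5 : h' * ((-Real.log ε) * b) < h' * (M ε : ℝ) := by nlinarith [hQ, hprod]
          have h6 := (mul_lt_mul_iff_right₀ hpos).1 h5
          have hfinal : b < (M ε : ℝ) / (-Real.log ε) := by
            rw [lt_div_iff₀ hlog]; linarith [h6]
          simp only [hF]
          exact_mod_cast hfinal.le
        refine le_liminf_of_le ?_ hevb
        isBoundedDefault
    exact absurd hble (not_le.2 hbR)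


end Paper
end

section
/- Let (X,d) be a compact metric space and f : X → X a homeomorphism. If (X,f) has the periodic gluing orbit property, then h(f) ≤ p(f), where h(f) is the topological entropy and p(f) = limsup_{n→∞} (ln p_n(f))/n is the exponential growth rate of the number p_n(f) of periodic points of f with period at most n. -/
open Filter Set Metric

namespace Paper

variable {X : Type*}

lemma perPts_mono (f : X → X) {a b : ℕ} (h : a ≤ b) : perPts f a ⊆ perPts f b :=
  fun _ ⟨m, h1, h2, h3⟩ => ⟨m, h1, h2.trans h, h3⟩

lemma log_nat_mono {a b : ℕ} (h : a ≤ b) : Real.log a ≤ Real.log b := by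
  rcases Nat.eq_zero_or_pos a with ha | ha
  · simpa [ha] using Real.log_natCast_nonneg b
  · exact Real.log_le_log (by exact_mod_cast ha) (by exact_mod_cast h)

lemma exists_periodic_shadow [MetricSpace X] {f : X → X} {ε : ℝ} {M : ℕ}
    (h : ∀ k : ℕ, 0 < k → ∀ C : ℕ → X × ℕ, (∀ j < k, 0 < (C j).2) →
      ∃ t : ℕ, 0 < t ∧ t ≤ M ∧
        ∃ g : ℕ → ℕ, (∀ j < k - 1, 0 < g j ∧ g j ≤ M) ∧
          ∃ z : X, Shadows f k C g ε z ∧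
            f^[sTimes C g (k - 1) + (C (k - 1)).2 + t] z = z)
    {n : ℕ} (hn : 0 < n) (x : X) :
    ∃ z ∈ perPts f (n + M), ∀ l < n, dist (f^[l] z) (f^[l] x) < ε := by
  obtain ⟨t, ht0, htM, g, -, z, hz, hper⟩ :=
    h 1 Nat.one_pos (fun _ => (x, n)) (fun j _ => hn)
  refine ⟨z, ⟨n + t, by omega, by omega, ?_⟩, ?_⟩
  · simpa [sTimes] using hper
  · intro l hl
    simpa [sTimes] using hz 0 Nat.one_pos l hl

lemma sepNum_le_ncard_perPts [MetricSpace X] (f : X → X) {ε : ℝ} {n M : ℕ}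
    (key : ∀ x : X, ∃ z ∈ perPts f (n + M), ∀ l < n, dist (f^[l] z) (f^[l] x) < ε / 2)
    (hfin : (perPts f (n + M)).Finite) :
    sepNum f n ε ≤ (perPts f (n + M)).ncard := by
  apply csSup_le
  · exact ⟨0, ∅, by simp [IsSepSet], rfl⟩
  rintro N ⟨E, hE, rfl⟩
  classical
  choose φ hφmem hφ using key
  have hinj : Set.InjOn φ ↑E := by
    intro x hx y hy hxy
    by_contra hne
    obtain ⟨k, hk, hsep⟩ := hE x hx y hy hne
    have h1 := hφ x k hk
    have h2 := hφ y k hk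
    rw [hxy] at h1
    have htri := dist_triangle (f^[k] x) (f^[k] (φ y)) (f^[k] y)
    rw [dist_comm] at h1
    linarith
  calc E.card = (↑E : Set X).ncard := (Set.ncard_coe_finset E).symm
    _ = (φ '' ↑E).ncard := (Set.ncard_image_of_injOn hinj).symm
    _ ≤ _ := Set.ncard_le_ncard (by rintro _ ⟨x, -, rfl⟩; exact hφmem x) hfin

theorem stmt11 [MetricSpace X] [CompactSpace X] (f : X ≃ₜ X)
    (hpgo : PerGluingOrbit (⇑f)) :
    topEnt (⇑f) ≤ perGrowth (⇑f) := by
  classical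
  refine iSup_le fun ε => iSup_le fun hε => ?_
  obtain ⟨M, hM, hspec⟩ := hpgo (ε / 2) (by positivity)
  set B : ℕ → EReal := fun n =>
    if h : (perPts (⇑f) n).Finite then
      ((Real.log (perPts (⇑f) n).ncard / n : ℝ) : EReal) else ⊤ with hB
  have hPG : perGrowth (⇑f) = limsup B atTop := rfl
  by_cases hfin : ∀ n, (perPts (⇑f) n).Finite
  · have hBco : ∀ n, B n = ((Real.log (perPts (⇑f) n).ncard / n : ℝ) : EReal) :=
      fun n => dif_pos (hfin n)
    have hB0 : ∀ n, (0 : EReal) ≤ B n := by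
      intro n
      rw [hBco n]
      exact_mod_cast div_nonneg (Real.log_natCast_nonneg _) (Nat.cast_nonneg n)
    have hL0 : (0 : EReal) ≤ limsup B atTop := by
      have := Filter.limsup_le_limsup (Filter.Eventually.of_forall hB0)
        (f := (atTop : Filter ℕ)) (u := fun _ => (0 : EReal))
      simpa using this
    rw [hPG]
    by_contra hlt
    push_neg at hlt
    obtain ⟨r, hr1, hr2⟩ := EReal.exists_between_coe_real hlt
    have hr0 : (0 : ℝ) < r := by exact_mod_cast lt_of_le_of_lt hL0 hr1
    have hevB : ∀ᶠ m in atTop, B m < (r : EReal) :=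
      Filter.eventually_lt_of_limsup_lt hr1
    obtain ⟨N, hN⟩ := eventually_atTop.mp hevB
    have hbound : ∀ᶠ n : ℕ in atTop,
        ((Real.log (sepNum (⇑f) n ε) / n : ℝ) : EReal) ≤ ((r + r * M / n : ℝ) : EReal) := by
      filter_upwards [eventually_ge_atTop (max N 1)] with n hn
      have hn1 : 1 ≤ n := le_trans (le_max_right _ _) hn
      have hnm : N ≤ n + M := le_trans (le_trans (le_max_left _ _) hn) (Nat.le_add_right _ _)
      have hBn := hN (n + M) hnm
      rw [hBco] at hBn
      have hlog : Real.log ((perPts (⇑f) (n + M)).ncard) / ((n + M : ℕ) : ℝ) < r := by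
        exact_mod_cast hBn
      have hpos : (0 : ℝ) < ((n + M : ℕ) : ℝ) := by positivity
      have hlog2 : Real.log ((perPts (⇑f) (n + M)).ncard) < r * ((n + M : ℕ) : ℝ) :=
        (div_lt_iff₀ hpos).mp hlog
      have hsep : sepNum (⇑f) n ε ≤ (perPts (⇑f) (n + M)).ncard :=
        sepNum_le_ncard_perPts (⇑f)
          (fun x => exists_periodic_shadow hspec hn1 x) (hfin _)
      have hls : Real.log (sepNum (⇑f) n ε) ≤ r * ((n + M : ℕ) : ℝ) :=
        (log_nat_mono hsep).trans hlog2.le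
      have hn0 : (0 : ℝ) < (n : ℝ) := by exact_mod_cast hn1
      have : Real.log (sepNum (⇑f) n ε) / n ≤ r + r * M / n := by
        have h1 : Real.log (sepNum (⇑f) n ε) / n ≤ r * ((n + M : ℕ) : ℝ) / n := by
          gcongr
        have h2 : r * ((n + M : ℕ) : ℝ) / n = r + r * M / n := by
          push_cast
          field_simp
        linarith [h2 ▸ h1]
      exact_mod_cast this
    have htend : Tendsto (fun n : ℕ => ((r + r * M / n : ℝ) : EReal)) atTop (nhds (r : EReal)) := by
      apply EReal.tendsto_coe.mpr
      have h0 : Tendsto (fun n : ℕ => r * M / (n : ℝ)) atTop (nhds 0) :=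
        Tendsto.div_atTop tendsto_const_nhds tendsto_natCast_atTop_atTop
      simpa using tendsto_const_nhds.add h0
    have hfinle : limsup (fun n : ℕ =>
        ((Real.log (sepNum (⇑f) n ε) / n : ℝ) : EReal)) atTop ≤ (r : EReal) :=
      (Filter.limsup_le_limsup hbound).trans (le_of_eq htend.limsup_eq)
    exact (hfinle.trans_lt hr2).false
  · push_neg at hfin
    obtain ⟨n0, hn0⟩ := hfin
    have hev : ∀ᶠ n in atTop, B n = ⊤ := by
      filter_upwards [eventually_ge_atTop n0] with n hn
      refine dif_neg fun h => hn0 (h.subset (perPts_mono _ hn))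
    rw [hPG, Filter.limsup_congr hev, Filter.limsup_const]
    exact le_top

end Paper
end
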